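/- arXiv:2012.08935 — 8 statements merged into one kernel-verified Lean document; each statement's English description precedes it below -/
import Mathlib

section
/- For every real number θ with 0 < θ < 1 and all positive integers j and k, one has ((j+1)/k + 1)^(1-θ) - ((j+1)/k)^(1-θ) ≤ (Σ_{n=j+1}^{j+k} n^(-θ)) / (Σ_{n=1}^{k} n^(-θ)). -/
open MeasureTheory

private lemma anti_rpow {θ : ℝ} (hθ0 : 0 < θ) {c d : ℝ} (hc : 0 < c) :
    AntitoneOn (fun x : ℝ => x ^ (-θ)) (Set.Icc c d) := fun x hx _y _hy hxy =>
  Real.rpow_le_rpow_of_nonpos (lt_of_lt_of_le hc hx.1) hxy (by linarith)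

/-- Lemma (integral estimate), lower bound: for `0 < θ < 1` and positive integers `j, k`,
`((j+1)/k + 1)^(1-θ) - ((j+1)/k)^(1-θ) ≤ (Σ_{n=j+1}^{j+k} n^{-θ}) / (Σ_{n=1}^{k} n^{-θ})`. -/
theorem stmt0 (θ : ℝ) (hθ0 : 0 < θ) (hθ1 : θ < 1) (j k : ℕ) (hj : 0 < j) (hk : 0 < k) :
    (((j : ℝ) + 1) / k + 1) ^ (1 - θ) - (((j : ℝ) + 1) / k) ^ (1 - θ) ≤
      (∑ n ∈ Finset.Icc (j + 1) (j + k), (n : ℝ) ^ (-θ)) /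
        (∑ n ∈ Finset.Icc 1 k, (n : ℝ) ^ (-θ)) := by
  have hθ1' : (0:ℝ) < 1 - θ := by linarith
  have hkR : (0:ℝ) < k := by exact_mod_cast hk
  have hjR : (0:ℝ) < j := by exact_mod_cast hj
  -- lower bound on numerator sum
  have h1 : (((j:ℝ) + 1 + k) ^ (1 - θ) - ((j:ℝ) + 1) ^ (1 - θ)) / (1 - θ)
      ≤ ∑ n ∈ Finset.Icc (j + 1) (j + k), (n : ℝ) ^ (-θ) := by
    have hint : (∫ x in ((j:ℝ)+1)..((j:ℝ)+1+k), x ^ (-θ))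
        ≤ ∑ i ∈ Finset.range k, (((j:ℝ)+1) + i) ^ (-θ) :=
      AntitoneOn.integral_le_sum (anti_rpow hθ0 (by positivity))
    have hval : (∫ x in ((j:ℝ)+1)..((j:ℝ)+1+k), x ^ (-θ))
        = (((j:ℝ) + 1 + k) ^ (1 - θ) - ((j:ℝ) + 1) ^ (1 - θ)) / (1 - θ) := by
      rw [integral_rpow (Or.inl (by linarith))]
      ring_nf
    have hsum : ∑ n ∈ Finset.Icc (j + 1) (j + k), (n : ℝ) ^ (-θ)
        = ∑ i ∈ Finset.range k, (((j:ℝ)+1) + i) ^ (-θ) := by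
      rw [← Finset.Ico_add_one_right_eq_Icc, Finset.sum_Ico_eq_sum_range]
      have : j + k + 1 - (j + 1) = k := by omega
      rw [this]
      refine Finset.sum_congr rfl fun i _ => ?_
      push_cast; ring_nf
    rw [hsum, ← hval]; exact hint
  -- upper bound on denominator sum
  have h2 : ∑ n ∈ Finset.Icc 1 k, (n : ℝ) ^ (-θ) ≤ (k:ℝ) ^ (1 - θ) / (1 - θ) := by
    have hint : (∑ i ∈ Finset.range (k-1), ((1:ℝ) + ((i:ℕ) + 1 : ℕ)) ^ (-θ))
        ≤ ∫ x in (1:ℝ)..(1 + (k-1 : ℕ)), x ^ (-θ) :=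
      AntitoneOn.sum_le_integral (anti_rpow hθ0 one_pos)
    have hcast : (1:ℝ) + ((k:ℕ) - 1 : ℕ) = (k:ℝ) := by
      push_cast [Nat.cast_sub hk]; ring
    have hval : (∫ x in (1:ℝ)..(1 + (k-1 : ℕ)), x ^ (-θ))
        = ((k:ℝ) ^ (1 - θ) - 1) / (1 - θ) := by
      rw [hcast, integral_rpow (Or.inl (by linarith))]
      rw [Real.one_rpow]
      ring_nf
    have hsum : ∑ n ∈ Finset.Icc 1 k, (n : ℝ) ^ (-θ)
        = 1 + ∑ i ∈ Finset.range (k-1), ((1:ℝ) + ((i:ℕ) + 1 : ℕ)) ^ (-θ) := by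
      rw [← Finset.Ico_add_one_right_eq_Icc, Finset.sum_Ico_eq_sum_range]
      have : k + 1 - 1 = (k - 1) + 1 := by omega
      rw [this, Finset.sum_range_succ']
      have h0 : ((1 + 0 : ℕ) : ℝ) ^ (-θ) = 1 := by norm_num
      rw [h0, add_comm]
      congr 1
      refine Finset.sum_congr rfl fun i _ => ?_
      push_cast; ring_nf
    rw [hsum]
    have hone : (1:ℝ) ≤ 1 / (1 - θ) := by
      rw [le_div_iff₀ hθ1']; linarith
    have := hint.trans_eq hval
    calc 1 + ∑ i ∈ Finset.range (k-1), ((1:ℝ) + ((i:ℕ) + 1 : ℕ)) ^ (-θ)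
        ≤ 1 / (1 - θ) + ((k:ℝ) ^ (1 - θ) - 1) / (1 - θ) := by
          exact add_le_add hone this
      _ = (k:ℝ) ^ (1 - θ) / (1 - θ) := by ring
  -- positivity of denominator sum
  have hS2 : (0:ℝ) < ∑ n ∈ Finset.Icc 1 k, (n : ℝ) ^ (-θ) := by
    apply Finset.sum_pos
    · intro n hn
      have : 0 < n := by
        have := (Finset.mem_Icc.1 hn).1; omega
      positivity
    · exact ⟨1, Finset.mem_Icc.2 ⟨le_refl 1, hk⟩⟩
  have hA : (0:ℝ) ≤ ((j:ℝ) + 1 + k) ^ (1 - θ) - ((j:ℝ) + 1) ^ (1 - θ) := by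
    have := Real.rpow_le_rpow (by positivity : (0:ℝ) ≤ (j:ℝ)+1)
      (by linarith : (j:ℝ)+1 ≤ (j:ℝ)+1+k) (le_of_lt hθ1')
    linarith
  have hke : (0:ℝ) < (k:ℝ) ^ (1 - θ) := Real.rpow_pos_of_pos hkR _
  -- rewrite LHS
  have hL : ((j:ℝ) + 1) / k + 1 = ((j:ℝ) + 1 + k) / k := by field_simp
  rw [hL, Real.div_rpow (by positivity) hkR.le, Real.div_rpow (by positivity) hkR.le,
    div_sub_div_same, div_le_div_iff₀ hke hS2]
  calc ((↑j + 1 + ↑k) ^ (1 - θ) - (↑j + 1) ^ (1 - θ)) * ∑ n ∈ Finset.Icc 1 k, (n:ℝ) ^ (-θ)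
      ≤ ((↑j + 1 + ↑k) ^ (1 - θ) - (↑j + 1) ^ (1 - θ)) * ((k:ℝ) ^ (1 - θ) / (1 - θ)) :=
        mul_le_mul_of_nonneg_left h2 hA
    _ = (((↑j + 1 + ↑k) ^ (1 - θ) - (↑j + 1) ^ (1 - θ)) / (1 - θ)) * (k:ℝ) ^ (1 - θ) := by ring
    _ ≤ (∑ n ∈ Finset.Icc (j + 1) (j + k), (n:ℝ) ^ (-θ)) * (k:ℝ) ^ (1 - θ) :=
        mul_le_mul_of_nonneg_right h1 hke.le
end

section
/- For every real number θ with 0 < θ < 1 and all positive integers j and k, one has (Σ_{n=j+1}^{j+k} n^(-θ)) / (Σ_{n=1}^{k} n^(-θ)) ≤ ((j/k + 1)^(1-θ) - (j/k)^(1-θ)) / (2^(1-θ) - 1). -/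
open Set

lemma aux_concave {s c : ℝ} (hs0 : 0 < s) (hs1 : s ≤ 1) (hc : 0 ≤ c) {x : ℝ} (hx : 1 ≤ x) :
    (x + c) ^ s - x ^ s ≤ (1 + c) ^ s - 1 := by
  set g : ℝ → ℝ := fun y => (y + c) ^ s - y ^ s with hg
  have hderiv : ∀ y : ℝ, 0 < y →
      HasDerivAt g (1 * s * (y + c) ^ (s - 1) - 1 * s * y ^ (s - 1)) y := by
    intro y hy
    have h1 : HasDerivAt (fun y : ℝ => (y + c) ^ s) (1 * s * (y + c) ^ (s - 1)) y :=
      (((hasDerivAt_id y).add_const c).rpow_const (Or.inl (by positivity)))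
    have h2 : HasDerivAt (fun y : ℝ => y ^ s) (1 * s * y ^ (s - 1)) y :=
      ((hasDerivAt_id y).rpow_const (Or.inl hy.ne'))
    exact h1.sub h2
  have hanti : AntitoneOn g (Ici 1) := by
    apply antitoneOn_of_deriv_nonpos (convex_Ici 1)
    · intro y hy
      exact ((hderiv y (lt_of_lt_of_le one_pos hy)).continuousAt).continuousWithinAt
    · intro y hy
      rw [interior_Ici] at hy
      exact (hderiv y (lt_trans one_pos hy)).differentiableAt.differentiableWithinAt
    · intro y hy
      rw [interior_Ici] at hy
      have hy0 : (0:ℝ) < y := lt_trans one_pos hy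
      rw [(hderiv y hy0).deriv]
      have : (y + c) ^ (s - 1) ≤ y ^ (s - 1) :=
        Real.rpow_le_rpow_of_nonpos hy0 (by linarith) (by linarith)
      nlinarith
  have := hanti (mem_Ici.mpr le_rfl) (mem_Ici.mpr hx) hx
  simpa [hg, Real.one_rpow] using this

/-- Lemma (integral estimate), upper bound: for `0 < θ < 1` and positive integers `j, k`,
`(Σ_{n=j+1}^{j+k} n^{-θ}) / (Σ_{n=1}^{k} n^{-θ}) ≤ ((j/k + 1)^(1-θ) - (j/k)^(1-θ)) / (2^(1-θ) - 1)`. -/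
theorem stmt1 (θ : ℝ) (hθ0 : 0 < θ) (hθ1 : θ < 1) (j k : ℕ) (hj : 0 < j) (hk : 0 < k) :
    (∑ n ∈ Finset.Icc (j + 1) (j + k), (n : ℝ) ^ (-θ)) /
        (∑ n ∈ Finset.Icc 1 k, (n : ℝ) ^ (-θ)) ≤
      (((j : ℝ) / k + 1) ^ (1 - θ) - ((j : ℝ) / k) ^ (1 - θ)) / (2 ^ (1 - θ) - 1) := by
  have hs0 : (0:ℝ) < 1 - θ := by linarith
  have hj1 : (1:ℝ) ≤ (j:ℝ) := by exact_mod_cast hj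
  have hk1 : (1:ℝ) ≤ (k:ℝ) := by exact_mod_cast hk
  have hkpos : (0:ℝ) < k := by linarith
  have hjpos : (0:ℝ) < j := by linarith
  have hanti : ∀ x₀ : ℝ, 0 < x₀ →
      AntitoneOn (fun x : ℝ => x ^ (-θ)) (Icc x₀ (x₀ + (k:ℕ))) := by
    intro x₀ hx₀ a ha b hb hab
    exact Real.rpow_le_rpow_of_nonpos (lt_of_lt_of_le hx₀ ha.1) hab (by linarith)
  -- Numerator bound
  have hNsum : (∑ n ∈ Finset.Icc (j + 1) (j + k), (n : ℝ) ^ (-θ)) =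
      ∑ i ∈ Finset.range k, ((j:ℝ) + ((i + 1 : ℕ) : ℝ)) ^ (-θ) := by
    rw [← Finset.Ico_add_one_right_eq_Icc, Finset.sum_Ico_eq_sum_range]
    have h1 : j + k + 1 - (j + 1) = k := by omega
    rw [h1]
    apply Finset.sum_congr rfl
    intro i _
    congr 1
    push_cast
    ring
  have hNle : (∑ n ∈ Finset.Icc (j + 1) (j + k), (n : ℝ) ^ (-θ)) ≤
      ∫ x in (j:ℝ)..((j:ℝ) + (k:ℕ)), x ^ (-θ) := by
    rw [hNsum]
    exact (hanti j hjpos).sum_le_integral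
  have hNint : (∫ x in (j:ℝ)..((j:ℝ) + (k:ℕ)), x ^ (-θ)) =
      (((j:ℝ) + k) ^ (1 - θ) - (j:ℝ) ^ (1 - θ)) / (1 - θ) := by
    rw [integral_rpow (Or.inl (by linarith))]
    ring_nf
  have hnum : (∑ n ∈ Finset.Icc (j + 1) (j + k), (n : ℝ) ^ (-θ)) ≤
      (((j:ℝ) + k) ^ (1 - θ) - (j:ℝ) ^ (1 - θ)) / (1 - θ) := by
    rw [← hNint]; exact hNle
  -- Denominator bound
  have hDsum : (∑ n ∈ Finset.Icc 1 k, (n : ℝ) ^ (-θ)) =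
      ∑ i ∈ Finset.range k, ((1:ℝ) + ((i : ℕ) : ℝ)) ^ (-θ) := by
    rw [← Finset.Ico_add_one_right_eq_Icc, Finset.sum_Ico_eq_sum_range]
    have h1 : k + 1 - 1 = k := by omega
    rw [h1]
    apply Finset.sum_congr rfl
    intro i _
    congr 1
    push_cast
    ring
  have hDge : (∫ x in (1:ℝ)..((1:ℝ) + (k:ℕ)), x ^ (-θ)) ≤
      ∑ n ∈ Finset.Icc 1 k, (n : ℝ) ^ (-θ) := by
    rw [hDsum]
    exact (hanti 1 one_pos).integral_le_sum
  have hDint : (∫ x in (1:ℝ)..((1:ℝ) + (k:ℕ)), x ^ (-θ)) =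
      (((1:ℝ) + k) ^ (1 - θ) - 1) / (1 - θ) := by
    rw [integral_rpow (Or.inl (by linarith))]
    rw [Real.one_rpow]
    ring_nf
  have hkey : (2 ^ (1 - θ) - 1) * (k:ℝ) ^ (1 - θ) ≤ ((1:ℝ) + k) ^ (1 - θ) - 1 := by
    have h := aux_concave hs0 (by linarith) (le_of_lt hkpos) hk1
    have h2 : ((k:ℝ) + k) ^ (1 - θ) = 2 ^ (1 - θ) * (k:ℝ) ^ (1 - θ) := by
      rw [← Real.mul_rpow (by norm_num) (le_of_lt hkpos)]
      ring_nf
    nlinarith [Real.rpow_pos_of_pos hkpos (1 - θ)]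
  have hden : (2 ^ (1 - θ) - 1) * (k:ℝ) ^ (1 - θ) / (1 - θ) ≤
      ∑ n ∈ Finset.Icc 1 k, (n : ℝ) ^ (-θ) := by
    refine le_trans ?_ (hDint ▸ hDge)
    gcongr
  have hc2 : (0:ℝ) < 2 ^ (1 - θ) - 1 := by
    have : (1:ℝ) < 2 ^ (1 - θ) :=
      (Real.one_lt_rpow_iff_of_pos (by norm_num)).mpr (Or.inl ⟨by norm_num, hs0⟩)
    linarith
  have hkp : (0:ℝ) < (k:ℝ) ^ (1 - θ) := Real.rpow_pos_of_pos hkpos _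
  have hA : (0:ℝ) ≤ ((j:ℝ) + k) ^ (1 - θ) - (j:ℝ) ^ (1 - θ) := by
    have := Real.rpow_le_rpow (le_of_lt hjpos) (by linarith : (j:ℝ) ≤ (j:ℝ) + k)
      (le_of_lt hs0)
    linarith
  have hmain : (∑ n ∈ Finset.Icc (j + 1) (j + k), (n : ℝ) ^ (-θ)) /
      (∑ n ∈ Finset.Icc 1 k, (n : ℝ) ^ (-θ)) ≤
      ((((j:ℝ) + k) ^ (1 - θ) - (j:ℝ) ^ (1 - θ)) / (1 - θ)) /
      ((2 ^ (1 - θ) - 1) * (k:ℝ) ^ (1 - θ) / (1 - θ)) := by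
    apply div_le_div₀ (by positivity) hnum (by positivity) hden
  refine hmain.trans_eq ?_
  have hjk : ((j:ℝ) / k + 1) = ((j:ℝ) + k) / k := by field_simp
  rw [hjk, Real.div_rpow (by positivity) (le_of_lt hkpos),
    Real.div_rpow (le_of_lt hjpos) (le_of_lt hkpos)]
  rw [div_sub_div_same, div_div]
  have hXY : (1 - θ) * ((2 ^ (1 - θ) - 1) * (k:ℝ) ^ (1 - θ) / (1 - θ)) =
      (k:ℝ) ^ (1 - θ) * (2 ^ (1 - θ) - 1) := by
    field_simp
  rw [hXY, ← div_div]
end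

section
/- For 0 < θ < 1, the function g(t) = t - (t - 1/2)^(1-θ) · t^θ is monotonically decreasing on [2, ∞) and lim_{t→∞} g(t) = (1-θ)/2; in particular g(t) ≥ (1-θ)/2 for all t ≥ 2. -/
/-!
Write `g(t) = t - (t - a)^(1-θ) t^θ`. With `u = t / (t - a)` one gets
`g'(t) = 1 - ((1-θ) u^θ + θ u^(θ-1))`, which is `≤ 0` by weighted AM-GM since
`(u^θ)^(1-θ) (u^(θ-1))^θ = 1`. Substituting `s = 1/t` turns `g(t)` into the negated difference
quotient at `0` of `s ↦ (1 - a s)^(1-θ)`, whose derivative there is `-(1-θ) a`.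
Finally `g(t) - (1-θ) a = ((1-θ)(t-a) + θ t) - (t-a)^(1-θ) t^θ` is itself an AM-GM gap.
-/

open Filter Set Topology

noncomputable def geomMeanDefect (θ a t : ℝ) : ℝ := t - (t - a) ^ (1 - θ) * t ^ θ

section

variable {θ a : ℝ}

theorem one_le_mul_rpow_add_mul_rpow_sub_one (hθ0 : 0 ≤ θ) (hθ1 : θ ≤ 1) {u : ℝ} (hu : 0 < u) :
    1 ≤ (1 - θ) * u ^ θ + θ * u ^ (θ - 1) := by
  calc (1 : ℝ) = (u ^ θ) ^ (1 - θ) * (u ^ (θ - 1)) ^ θ := by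
        rw [← Real.rpow_mul hu.le, ← Real.rpow_mul hu.le, ← Real.rpow_add hu,
          show θ * (1 - θ) + (θ - 1) * θ = 0 by ring, Real.rpow_zero]
    _ ≤ (1 - θ) * u ^ θ + θ * u ^ (θ - 1) :=
      Real.geom_mean_le_arith_mean2_weighted (by linarith) hθ0 (by positivity) (by positivity)
        (by ring)

theorem hasDerivAt_geomMeanDefect {x : ℝ} (hxa : a < x) (hx : 0 < x) :
    HasDerivAt (geomMeanDefect θ a)
      (1 - ((1 - θ) * (x / (x - a)) ^ θ + θ * (x / (x - a)) ^ (θ - 1))) x := by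
  have hxa' : 0 < x - a := sub_pos.mpr hxa
  have hleft : HasDerivAt (fun t => (t - a) ^ (1 - θ)) ((1 - θ) * (x - a) ^ (-θ)) x := by
    simpa [show 1 - θ - 1 = -θ by ring] using
      ((hasDerivAt_id x).sub_const a).rpow_const (p := 1 - θ) (Or.inl hxa'.ne')
  have hright : HasDerivAt (fun t => t ^ θ) (θ * x ^ (θ - 1)) x :=
    Real.hasDerivAt_rpow_const (Or.inl hx.ne')
  refine ((hasDerivAt_id x).sub (hleft.mul hright)).congr_deriv ?_
  have hpow : ∀ p : ℝ, (x / (x - a)) ^ p = x ^ p * (x - a) ^ (-p) := fun p => by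
    rw [Real.div_rpow hx.le hxa'.le, div_eq_mul_inv, Real.rpow_neg hxa'.le]
  rw [hpow, hpow, neg_sub]
  ring

theorem antitoneOn_geomMeanDefect (hθ0 : 0 ≤ θ) (hθ1 : θ ≤ 1) (ha : 0 ≤ a) :
    AntitoneOn (geomMeanDefect θ a) (Ioi a) := by
  have hderiv : ∀ x ∈ Ioi a, HasDerivAt (geomMeanDefect θ a)
      (1 - ((1 - θ) * (x / (x - a)) ^ θ + θ * (x / (x - a)) ^ (θ - 1))) x :=
    fun x hx => hasDerivAt_geomMeanDefect hx (ha.trans_lt hx)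
  refine antitoneOn_of_hasDerivWithinAt_nonpos (convex_Ioi a)
    (fun x hx => (hderiv x hx).continuousAt.continuousWithinAt)
    (fun x hx => (hderiv x (interior_subset hx)).hasDerivWithinAt) fun x hx => ?_
  rw [interior_Ioi] at hx
  have hu : 0 < x / (x - a) := div_pos (ha.trans_lt hx) (sub_pos.mpr hx)
  linarith [one_le_mul_rpow_add_mul_rpow_sub_one hθ0 hθ1 hu]

theorem mul_le_geomMeanDefect (hθ0 : 0 ≤ θ) (hθ1 : θ ≤ 1) {t : ℝ} (hat : a ≤ t) (ht : 0 ≤ t) :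
    (1 - θ) * a ≤ geomMeanDefect θ a t := by
  have := Real.geom_mean_le_arith_mean2_weighted (sub_nonneg.mpr hθ1) hθ0 (sub_nonneg.mpr hat) ht
    (sub_add_cancel 1 θ)
  rw [geomMeanDefect]
  linarith

end

theorem tendsto_geomMeanDefect_atTop (θ a : ℝ) :
    Tendsto (geomMeanDefect θ a) atTop (𝓝 ((1 - θ) * a)) := by
  have hderiv : HasDerivAt (fun s : ℝ => (1 - a * s) ^ (1 - θ)) (-(a * (1 - θ))) 0 := by
    simpa using (((hasDerivAt_id (0 : ℝ)).const_mul a).const_sub 1).rpow_const (p := 1 - θ)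
      (Or.inl (by simp))
  have hslope : Tendsto (fun t : ℝ => -slope (fun s : ℝ => (1 - a * s) ^ (1 - θ)) 0 t⁻¹) atTop
      (𝓝 ((1 - θ) * a)) := by
    simpa [mul_comm a] using ((hasDerivAt_iff_tendsto_slope.mp hderiv).mono_left
      (nhdsWithin_mono _ fun s (hs : 0 < s) => hs.ne')).comp tendsto_inv_atTop_nhdsGT_zero |>.neg
  refine hslope.congr' ?_
  filter_upwards [eventually_gt_atTop a, eventually_gt_atTop 0] with t hta ht
  have hgm : t * ((t - a) / t) ^ (1 - θ) = (t - a) ^ (1 - θ) * t ^ θ := by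
    rw [Real.div_rpow (sub_pos.mpr hta).le ht.le, Real.rpow_sub ht, Real.rpow_one]
    field_simp
  rw [slope_def_field, geomMeanDefect, ← hgm]
  field_simp
  simp only [mul_zero, sub_zero, Real.one_rpow]
  ring

/-- For `0 < θ < 1`, the function `g(t) = t - (t - 1/2)^(1-θ) · t^θ` is monotone decreasing on
`[2, ∞)`, tends to `(1-θ)/2` at infinity, and in particular `g(t) ≥ (1-θ)/2` for all `t ≥ 2`. -/
theorem stmt4 (θ : ℝ) (hθ0 : 0 < θ) (hθ1 : θ < 1) :
    AntitoneOn (fun t : ℝ => t - (t - 1 / 2) ^ (1 - θ) * t ^ θ) (Set.Ici 2) ∧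
      Tendsto (fun t : ℝ => t - (t - 1 / 2) ^ (1 - θ) * t ^ θ) atTop (nhds ((1 - θ) / 2)) ∧
      ∀ t : ℝ, 2 ≤ t → (1 - θ) / 2 ≤ t - (t - 1 / 2) ^ (1 - θ) * t ^ θ := by
  have hhalf : (1 - θ) / 2 = (1 - θ) * (1 / 2) := by ring
  refine ⟨?_, ?_, fun t ht => ?_⟩
  · exact (antitoneOn_geomMeanDefect hθ0.le hθ1.le (by norm_num)).mono
      (Ici_subset_Ioi.mpr (by norm_num))
  · rw [hhalf]
    exact tendsto_geomMeanDefect_atTop θ (1 / 2)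
  · rw [hhalf]
    exact mul_le_geomMeanDefect hθ0.le hθ1.le (by linarith) (by linarith)
end

section
/- Let 0 < θ < 1 and set w_n = n^(-θ) for each positive integer n. Then for all positive integers i and k, ((1-θ)/2) · i^(-θ) ≤ (Σ_{n=(i-1)k+1}^{ik} n^(-θ)) / (Σ_{n=1}^{k} n^(-θ)) ≤ ((2 - 2^θ)/(2^(1-θ) - 1)) · i^(-θ). -/
/-!
The denominator is comparable to `k^{1-θ}`: it is at least `k · k^{-θ}`, and telescoping Bernoulli's
inequality `(1-θ) x^{-θ} ≤ x^{1-θ} - (x-1)^{1-θ}` bounds `(1-θ)` times it by `k^{1-θ}`. The block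
`((i-1)k, ik]` has `k` terms, each at least `(ik)^{-θ}`, and for `i ≥ 2` each at most `(ik/2)^{-θ}`
(for `i = 1` the ratio is `1`); this puts the ratio between `(1-θ) i^{-θ}` and `2^θ i^{-θ}`,
and `2^θ` is the upper constant since `2 - 2^θ = 2^θ (2^{1-θ} - 1)`.
-/

open Finset Real

lemma mul_rpow_sub_one_le_rpow_sub_rpow {p x : ℝ} (hp0 : 0 ≤ p) (hp1 : p ≤ 1) (hx : 1 ≤ x) :
    p * x ^ (p - 1) ≤ x ^ p - (x - 1) ^ p := by
  have hx0 : 0 < x := by linarith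
  have hinv : x⁻¹ ≤ 1 := inv_le_one_of_one_le₀ hx
  have hbernoulli : (1 + -x⁻¹) ^ p ≤ 1 + p * -x⁻¹ :=
    rpow_one_add_le_one_add_mul_self (by linarith) hp0 hp1
  have hfactor : x - 1 = x * (1 + -x⁻¹) := by field_simp; ring
  calc p * x ^ (p - 1) = x ^ p * (1 - (1 + p * -x⁻¹)) := by
        rw [rpow_sub_one hx0.ne']; field_simp; ring
    _ ≤ x ^ p * (1 - (1 + -x⁻¹) ^ p) := by gcongr
    _ = x ^ p - (x - 1) ^ p := by
        rw [hfactor, mul_rpow hx0.le (by linarith)]; ring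

lemma one_sub_mul_sum_rpow_neg_le {θ : ℝ} (hθ0 : 0 ≤ θ) (hθ1 : θ ≤ 1) (k : ℕ) :
    (1 - θ) * ∑ n ∈ Icc 1 k, (n : ℝ) ^ (-θ) ≤ (k : ℝ) ^ (1 - θ) := by
  induction k with
  | zero => simpa using rpow_nonneg le_rfl (1 - θ)
  | succ k ih =>
    have hstep := mul_rpow_sub_one_le_rpow_sub_rpow (p := 1 - θ) (x := (k : ℝ) + 1)
      (by linarith) (by linarith) (by linarith [k.cast_nonneg (α := ℝ)])
    rw [sum_Icc_succ_top (by omega), mul_add]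
    simp only [sub_sub_cancel_left, add_sub_cancel_right] at hstep
    push_cast
    linarith

lemma card_mul_rpow_neg_le_sum {θ : ℝ} (hθ : 0 ≤ θ) {s : Finset ℕ} {m : ℝ}
    (hs : ∀ n ∈ s, 0 < n ∧ (n : ℝ) ≤ m) :
    #s * m ^ (-θ) ≤ ∑ n ∈ s, (n : ℝ) ^ (-θ) := by
  rw [← nsmul_eq_mul]
  refine card_nsmul_le_sum _ _ _ fun n hn => ?_
  exact rpow_le_rpow_of_nonpos (by exact_mod_cast (hs n hn).1) (hs n hn).2 (by linarith)

lemma sum_rpow_neg_le_card_mul {θ : ℝ} (hθ : 0 ≤ θ) {s : Finset ℕ} {m : ℝ} (hm : 0 < m)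
    (hs : ∀ n ∈ s, m ≤ n) :
    ∑ n ∈ s, (n : ℝ) ^ (-θ) ≤ #s * m ^ (-θ) := by
  rw [← nsmul_eq_mul]
  exact sum_le_card_nsmul _ _ _ fun n hn => rpow_le_rpow_of_nonpos hm (hs n hn) (by linarith)

lemma mul_rpow_neg {x : ℝ} (hx : 0 < x) (θ : ℝ) : x * x ^ (-θ) = x ^ (1 - θ) := by
  rw [sub_eq_add_neg, rpow_add hx, rpow_one]

lemma rpow_one_sub_le_sum_rpow_neg {θ : ℝ} (hθ : 0 ≤ θ) {k : ℕ} (hk : 0 < k) :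
    (k : ℝ) ^ (1 - θ) ≤ ∑ n ∈ Icc 1 k, (n : ℝ) ^ (-θ) := by
  have h := card_mul_rpow_neg_le_sum hθ (s := Icc 1 k) (m := k) fun n hn => by
    simp only [mem_Icc] at hn; exact ⟨hn.1, by exact_mod_cast hn.2⟩
  rwa [Nat.card_Icc, Nat.add_sub_cancel, mul_rpow_neg (by positivity)] at h

lemma card_Icc_block {i : ℕ} (hi : 0 < i) (k : ℕ) : #(Icc ((i - 1) * k + 1) (i * k)) = k := by
  obtain ⟨j, rfl⟩ := Nat.exists_eq_add_of_lt hi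
  simp only [Nat.card_Icc, zero_add, Nat.add_sub_cancel, add_mul, one_mul]
  omega

lemma rpow_neg_mul_rpow_one_sub_le_sum_block {θ : ℝ} (hθ : 0 ≤ θ) {i k : ℕ} (hi : 0 < i)
    (hk : 0 < k) :
    (i : ℝ) ^ (-θ) * (k : ℝ) ^ (1 - θ) ≤ ∑ n ∈ Icc ((i - 1) * k + 1) (i * k), (n : ℝ) ^ (-θ) := by
  have h := card_mul_rpow_neg_le_sum hθ (s := Icc ((i - 1) * k + 1) (i * k)) (m := i * k)
    fun n hn => by simp only [mem_Icc] at hn; exact ⟨by omega, by exact_mod_cast hn.2⟩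
  rwa [card_Icc_block hi, mul_rpow (by positivity) (by positivity), mul_left_comm,
    mul_rpow_neg (by positivity)] at h

lemma sum_block_le_two_rpow_mul {θ : ℝ} (hθ : 0 ≤ θ) {i k : ℕ} (hi : 2 ≤ i) (hk : 0 < k) :
    ∑ n ∈ Icc ((i - 1) * k + 1) (i * k), (n : ℝ) ^ (-θ) ≤
      2 ^ θ * (i : ℝ) ^ (-θ) * (k : ℝ) ^ (1 - θ) := by
  have hhalf : ∀ n ∈ Icc ((i - 1) * k + 1) (i * k), (i : ℝ) * k / 2 ≤ n := fun n hn => by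
    obtain ⟨j, rfl⟩ : ∃ j, i = j + 2 := ⟨i - 2, by omega⟩
    have hn : (j + 1) * k + 1 ≤ n := by simpa using (mem_Icc.1 hn).1
    have : (j + 2) * k ≤ n * 2 := by nlinarith
    rw [div_le_iff₀ two_pos]
    exact_mod_cast this
  have hbound :
      (k : ℝ) * ((i : ℝ) * k / 2) ^ (-θ) = 2 ^ θ * (i : ℝ) ^ (-θ) * (k : ℝ) ^ (1 - θ) := by
    rw [div_rpow (by positivity) zero_le_two, mul_rpow (by positivity) (by positivity),
      rpow_neg zero_le_two, div_inv_eq_mul, ← mul_rpow_neg (by positivity : (0 : ℝ) < k)]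
    ring
  have h := sum_rpow_neg_le_card_mul hθ (by positivity) hhalf
  rwa [card_Icc_block (by omega), hbound] at h

lemma one_sub_mul_rpow_neg_le_sum_block_div {θ : ℝ} (hθ0 : 0 ≤ θ) (hθ1 : θ < 1) {i k : ℕ}
    (hi : 0 < i) (hk : 0 < k) :
    (1 - θ) * (i : ℝ) ^ (-θ) ≤
      (∑ n ∈ Icc ((i - 1) * k + 1) (i * k), (n : ℝ) ^ (-θ)) / ∑ n ∈ Icc 1 k, (n : ℝ) ^ (-θ) := by
  have hW := rpow_one_sub_le_sum_rpow_neg hθ0 hk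
  rw [le_div_iff₀ ((rpow_pos_of_pos (by positivity) _).trans_le hW)]
  calc _ = (i : ℝ) ^ (-θ) * ((1 - θ) * ∑ n ∈ Icc 1 k, (n : ℝ) ^ (-θ)) := by ring
    _ ≤ (i : ℝ) ^ (-θ) * (k : ℝ) ^ (1 - θ) := by
        gcongr; exact one_sub_mul_sum_rpow_neg_le hθ0 hθ1.le k
    _ ≤ _ := rpow_neg_mul_rpow_one_sub_le_sum_block hθ0 hi hk

lemma sum_block_div_le_two_rpow_mul {θ : ℝ} (hθ : 0 ≤ θ) {i k : ℕ} (hi : 0 < i) (hk : 0 < k) :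
    (∑ n ∈ Icc ((i - 1) * k + 1) (i * k), (n : ℝ) ^ (-θ)) / ∑ n ∈ Icc 1 k, (n : ℝ) ^ (-θ) ≤
      2 ^ θ * (i : ℝ) ^ (-θ) := by
  have hW := rpow_one_sub_le_sum_rpow_neg hθ hk
  have hWpos := (rpow_pos_of_pos (Nat.cast_pos.2 hk) (1 - θ)).trans_le hW
  obtain rfl | hi2 := (Nat.one_le_iff_ne_zero.2 hi.ne').eq_or_lt
  · simpa [hWpos.ne'] using one_le_rpow one_le_two hθ
  rw [div_le_iff₀ hWpos]
  calc _ ≤ 2 ^ θ * (i : ℝ) ^ (-θ) * (k : ℝ) ^ (1 - θ) := sum_block_le_two_rpow_mul hθ hi2 hk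
    _ ≤ _ := by gcongr

lemma two_sub_rpow_div_rpow_one_sub_sub_one {θ : ℝ} (hθ : θ < 1) :
    (2 - 2 ^ θ) / (2 ^ (1 - θ) - 1) = (2 : ℝ) ^ θ := by
  have hden : 0 < (2 : ℝ) ^ (1 - θ) - 1 := sub_pos.2 (one_lt_rpow one_lt_two (by linarith))
  rw [div_eq_iff hden.ne', mul_sub, mul_one, ← rpow_add two_pos]
  norm_num

/-- Uniform two-sided comparison of block-averaged weights with the weight `w_n = n^{-θ}`:
for `0 < θ < 1` and positive integers `i, k`,
`((1-θ)/2) i^{-θ} ≤ (Σ_{n=(i-1)k+1}^{ik} n^{-θ}) / (Σ_{n=1}^{k} n^{-θ}) ≤ ((2-2^θ)/(2^{1-θ}-1)) i^{-θ}`. -/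
theorem stmt6 (θ : ℝ) (hθ0 : 0 < θ) (hθ1 : θ < 1) (i k : ℕ) (hi : 0 < i) (hk : 0 < k) :
    (1 - θ) / 2 * (i : ℝ) ^ (-θ) ≤
        (∑ n ∈ Finset.Icc ((i - 1) * k + 1) (i * k), (n : ℝ) ^ (-θ)) /
          (∑ n ∈ Finset.Icc 1 k, (n : ℝ) ^ (-θ)) ∧
      (∑ n ∈ Finset.Icc ((i - 1) * k + 1) (i * k), (n : ℝ) ^ (-θ)) /
          (∑ n ∈ Finset.Icc 1 k, (n : ℝ) ^ (-θ)) ≤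
        (2 - 2 ^ θ) / (2 ^ (1 - θ) - 1) * (i : ℝ) ^ (-θ) := by
  refine ⟨?_, ?_⟩
  · calc (1 - θ) / 2 * (i : ℝ) ^ (-θ) ≤ (1 - θ) * (i : ℝ) ^ (-θ) := by
          gcongr; linarith
      _ ≤ _ := one_sub_mul_rpow_neg_le_sum_block_div hθ0.le hθ1 hi hk
  · rw [two_sub_rpow_div_rpow_one_sub_sub_one hθ1]
    exact sum_block_div_le_two_rpow_mul hθ0.le hi hk
end

section
/- Let 0 < θ < 1, let (j_k) be a sequence of positive integers with partial weighted sums J_k = Σ_{m=1}^{k} m·j_m, and suppose J_{k-1}/j_k ≤ M for all k ≥ 2 and some M ≥ 1. Then for all k ≥ 1 and all 1 ≤ i ≤ k (assuming j_k ≥ 2), (Σ_{n=J_{k-1}+(i-1)j_k+1}^{J_{k-1}+i·j_k} n^(-θ)) / (Σ_{n=1}^{j_k} n^(-θ)) ≥ ((1-θ)/2) · (1/(M+1))^θ · i^(-θ). -/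
open Finset Real

lemma increment_lb {θ : ℝ} (hθ0 : 0 < θ) (hθ1 : θ < 1) (n : ℕ) (hn : 1 ≤ n) :
    (1 - θ) * (n : ℝ) ^ (-θ) ≤ (n : ℝ) ^ (1 - θ) - ((n - 1 : ℕ) : ℝ) ^ (1 - θ) := by
  have hn0 : (0:ℝ) < n := by exact_mod_cast hn
  have hs : (-1:ℝ) ≤ -1 / n := by
    have h : 1 / (n:ℝ) ≤ 1 := by rw [div_le_one hn0]; exact_mod_cast hn
    have : -1 / (n:ℝ) = -(1/n) := by ring
    linarith [this]
  have hb := rpow_one_add_le_one_add_mul_self hs (p := 1 - θ) (by linarith) (by linarith)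
  have hcast : ((n - 1 : ℕ) : ℝ) = (n : ℝ) * (1 + -1 / n) := by
    push_cast [Nat.cast_sub hn]
    field_simp
    ring
  have h1 : ((n - 1 : ℕ) : ℝ) ^ (1 - θ) ≤ (n:ℝ) ^ (1 - θ) * (1 + (1-θ) * (-1/n)) := by
    rw [hcast, Real.mul_rpow hn0.le (by linarith)]
    exact mul_le_mul_of_nonneg_left hb (Real.rpow_nonneg hn0.le _)
  have h2 : (n:ℝ) ^ (1 - θ) * (1/n) = (n:ℝ) ^ (-θ) := by
    rw [show (1 : ℝ) - θ = 1 + -θ from by ring, Real.rpow_one_add' hn0.le (by linarith)]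
    field_simp
  have h3 : (n:ℝ) ^ (1-θ) * (1 + (1-θ)*(-1/n)) = (n:ℝ)^(1-θ) - (1-θ)*(n:ℝ)^(-θ) := by
    rw [← h2]; ring
  linarith [h1, h3]

lemma den_ub {θ : ℝ} (hθ0 : 0 < θ) (hθ1 : θ < 1) (b : ℕ) :
    ∑ n ∈ Finset.Icc 1 b, (n : ℝ) ^ (-θ) ≤ (b : ℝ) ^ (1 - θ) / (1 - θ) := by
  have h1 : (1 - θ) * ∑ n ∈ Finset.Icc 1 b, (n : ℝ) ^ (-θ) ≤ (b:ℝ) ^ (1-θ) := by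
    rw [Finset.mul_sum]
    calc ∑ n ∈ Finset.Icc 1 b, (1-θ) * (n : ℝ) ^ (-θ)
        ≤ ∑ n ∈ Finset.Icc 1 b, ((n : ℝ) ^ (1-θ) - ((n - 1 : ℕ) : ℝ) ^ (1 - θ)) := by
          apply Finset.sum_le_sum
          intro n hn
          exact increment_lb hθ0 hθ1 n (Finset.mem_Icc.1 hn).1
      _ = (b:ℝ) ^ (1-θ) := by
          rw [show Finset.Icc 1 b = Finset.Ico 1 (b+1) from (Finset.Ico_add_one_right_eq_Icc 1 b).symm,
            Finset.sum_Ico_eq_sum_range]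
          simp only [Nat.add_sub_cancel]
          have he : ∀ i:ℕ, ((1+i:ℕ):ℝ)^(1-θ) - (((1+i)-1:ℕ):ℝ)^(1-θ)
              = (fun m:ℕ => ((m:ℝ))^(1-θ)) (i+1) - (fun m:ℕ => ((m:ℝ))^(1-θ)) i := by
            intro i
            have : (1+i:ℕ) = i + 1 := by omega
            simp [this]
          rw [Finset.sum_congr rfl (fun i _ => he i)]
          refine (Finset.sum_range_sub (fun m : ℕ => ((m:ℝ))^(1-θ)) b).trans ?_
          simp [Real.zero_rpow (by linarith : (1:ℝ) - θ ≠ 0)]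
  rw [le_div_iff₀ (by linarith)]
  linarith

/-- Shifted-block lower estimate for the weight `w_n = n^{-θ}`: if `J_k = Σ_{m=1}^k m·j_m`,
`J_{k-1}/j_k ≤ M` for all `k ≥ 2`, and `j_k ≥ 2`, then for `k ≥ 1` and `1 ≤ i ≤ k`,
`(Σ_{n=J_{k-1}+(i-1)j_k+1}^{J_{k-1}+i·j_k} n^{-θ}) / (Σ_{n=1}^{j_k} n^{-θ})
  ≥ ((1-θ)/2) (1/(M+1))^θ i^{-θ}`. -/
theorem stmt11 (θ : ℝ) (hθ0 : 0 < θ) (hθ1 : θ < 1) (M : ℝ) (hM : 1 ≤ M)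
    (j : ℕ → ℕ) (hj : ∀ k, 1 ≤ k → 2 ≤ j k)
    (J : ℕ → ℕ) (hJ : ∀ k, J k = ∑ m ∈ Finset.Icc 1 k, m * j m)
    (hratio : ∀ k, 2 ≤ k → (J (k - 1) : ℝ) / (j k : ℝ) ≤ M)
    (k i : ℕ) (hk : 1 ≤ k) (hi1 : 1 ≤ i) (hik : i ≤ k) :
    (1 - θ) / 2 * (1 / (M + 1)) ^ θ * (i : ℝ) ^ (-θ) ≤
      (∑ n ∈ Finset.Icc (J (k - 1) + (i - 1) * j k + 1) (J (k - 1) + i * j k), (n : ℝ) ^ (-θ)) /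
        (∑ n ∈ Finset.Icc 1 (j k), (n : ℝ) ^ (-θ)) := by
  set a := J (k - 1) with hadef
  set b := j k with hbdef
  have hb2 : 2 ≤ b := hj k hk
  have hb0 : (0:ℝ) < b := by exact_mod_cast (by omega : 0 < b)
  have hi0 : (0:ℝ) < i := by exact_mod_cast hi1
  have hM1 : (0:ℝ) < M + 1 := by linarith
  have hi1' : (1:ℝ) ≤ (i:ℝ) := by exact_mod_cast hi1
  have haM : (a:ℝ) ≤ M * b := by
    rcases eq_or_lt_of_le hk with h1 | h2
    · have ha0 : a = 0 := by
        rw [hadef, ← h1]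
        simp [hJ 0]
      rw [ha0]
      simp
      positivity
    · have := hratio k h2
      rw [div_le_iff₀ hb0] at this
      exact this
  have hsum : (a:ℝ) + i * b ≤ (M + 1) * ((i:ℝ) * b) := by
    have h1 : (b:ℝ) ≤ (i:ℝ) * b := by nlinarith
    nlinarith
  have hX : (0:ℝ) < (a:ℝ) + i * b := by
    have h1 := mul_pos hi0 hb0
    have h2 : (0:ℝ) ≤ (a:ℝ) := Nat.cast_nonneg a
    linarith
  have hden : 0 < ∑ n ∈ Finset.Icc 1 b, (n : ℝ) ^ (-θ) := by
    apply Finset.sum_pos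
    · intro n hn
      have : 0 < n := (Finset.mem_Icc.1 hn).1
      exact Real.rpow_pos_of_pos (by exact_mod_cast this) _
    · exact ⟨1, Finset.mem_Icc.2 ⟨le_refl 1, by omega⟩⟩
  obtain ⟨i', rfl⟩ : ∃ i', i = i' + 1 := ⟨i - 1, by omega⟩
  push_cast at hsum hX hi0 hi1' ⊢
  set x : ℝ := (i':ℝ) + 1 with hxdef
  have hcard : (Finset.Icc (a + (i' + 1 - 1) * b + 1) (a + (i' + 1) * b)).card = b := by
    simp only [Nat.add_sub_cancel]
    rw [Nat.card_Icc, Nat.succ_mul]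
    omega
  have hnum : (b:ℝ) * ((a:ℝ) + x * b) ^ (-θ) ≤
      ∑ n ∈ Finset.Icc (a + (i' + 1 - 1) * b + 1) (a + (i' + 1) * b), (n : ℝ) ^ (-θ) := by
    have h := Finset.card_nsmul_le_sum (Finset.Icc (a + (i' + 1 - 1) * b + 1) (a + (i' + 1) * b))
      (fun n => (n : ℝ) ^ (-θ)) (((a:ℝ) + x * b) ^ (-θ)) ?_
    · rwa [hcard, nsmul_eq_mul] at h
    · intro n hn
      obtain ⟨hn1, hn2⟩ := Finset.mem_Icc.1 hn
      have hn0 : (0:ℝ) < n := by exact_mod_cast (by omega : 0 < n)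
      apply Real.rpow_le_rpow_of_nonpos hn0 _ (by linarith)
      have : (n:ℝ) ≤ ((a + (i' + 1) * b : ℕ) : ℝ) := by exact_mod_cast hn2
      push_cast at this
      rw [hxdef]
      linarith
  rw [le_div_iff₀ hden]
  have hL0 : (0:ℝ) ≤ (1 - θ) / 2 * (1 / (M + 1)) ^ θ * x ^ (-θ) :=
    mul_nonneg (mul_nonneg (by linarith) (Real.rpow_nonneg (by positivity) θ))
      (Real.rpow_nonneg (by positivity) (-θ))
  have h1θ : (1:ℝ) - θ ≠ 0 := by linarith
  calc (1 - θ) / 2 * (1 / (M + 1)) ^ θ * x ^ (-θ) *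
        ∑ n ∈ Finset.Icc 1 b, (n : ℝ) ^ (-θ)
      ≤ (1 - θ) / 2 * (1 / (M + 1)) ^ θ * x ^ (-θ) * ((b : ℝ) ^ (1 - θ) / (1 - θ)) :=
        mul_le_mul_of_nonneg_left (den_ub hθ0 hθ1 b) hL0
    _ ≤ (b:ℝ) * ((a:ℝ) + x * b) ^ (-θ) := by
        have e1 : (1 / (M + 1) : ℝ) ^ θ = (M + 1) ^ (-θ) := by
          rw [Real.rpow_neg hM1.le, one_div, ← Real.inv_rpow hM1.le]
        have e3 : (b:ℝ) ^ (1 - θ) = b * (b:ℝ) ^ (-θ) := by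
          rw [show (1 : ℝ) - θ = 1 + -θ from by ring, Real.rpow_one_add' hb0.le (by linarith)]
        have e2 : ((M + 1) * (x * b)) ^ (-θ) = (M + 1) ^ (-θ) * (x ^ (-θ) * (b:ℝ) ^ (-θ)) := by
          rw [Real.mul_rpow hM1.le (by positivity), Real.mul_rpow (by positivity) hb0.le]
        have step : ((M + 1) * (x * b)) ^ (-θ) ≤ ((a:ℝ) + x * b) ^ (-θ) :=
          Real.rpow_le_rpow_of_nonpos hX hsum (by linarith)
        have hstep0 : (0:ℝ) ≤ ((M + 1) * (x * b)) ^ (-θ) :=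
          Real.rpow_nonneg (by positivity) _
        have lhs_eq : (1 - θ) / 2 * (1 / (M + 1)) ^ θ * x ^ (-θ) *
            ((b : ℝ) ^ (1 - θ) / (1 - θ)) = (b:ℝ) / 2 * ((M + 1) * (x * b)) ^ (-θ) := by
          rw [e1, e3, e2]
          field_simp
        rw [lhs_eq]
        calc (b:ℝ) / 2 * ((M + 1) * (x * b)) ^ (-θ)
            ≤ (b:ℝ) * ((M + 1) * (x * b)) ^ (-θ) :=
              mul_le_mul_of_nonneg_right (by linarith) hstep0
          _ ≤ (b:ℝ) * ((a:ℝ) + x * b) ^ (-θ) := mul_le_mul_of_nonneg_left step hb0.le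
    _ ≤ _ := hnum
end

section
/- Let X and Z be infinite-dimensional Banach spaces such that Z ⊕ Z is isomorphic to Z and X is not isomorphic to any complemented subspace of Z. Then the closure of the set J_Z(X) of bounded operators on X that factor through Z is a proper (two-sided, closed) ideal in the Banach algebra L(X) of bounded operators on X. -/
/-!
If the identity of `X` were a limit of operators `A ∘ B` factoring through `Z`, one of them would
be invertible in the Banach algebra `L(X)`, so `A ∘ C = 1` for `C = B ∘ (A ∘ B)⁻¹`. Then `C ∘ A`
is a projection on `Z` whose range is isomorphic to `X` via `C`. The ideal properties come from
`Z × Z ≃ Z`, which turns a sum of two factorizations into one.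
-/

namespace ContinuousLinearMap

section Algebraic

variable {R : Type*} [Semiring R]
  {Z X Y W : Type*} [TopologicalSpace Z] [AddCommMonoid Z] [Module R Z]
  [TopologicalSpace X] [AddCommMonoid X] [Module R X]
  [TopologicalSpace Y] [AddCommMonoid Y] [Module R Y]
  [TopologicalSpace W] [AddCommMonoid W] [Module R W]

variable (R Z X Y) in
/-- `J_Z(X)` is `factoringThrough R Z X X`. -/
def factoringThrough : Set (X →L[R] Y) :=
  {T | ∃ (A : Z →L[R] Y) (B : X →L[R] Z), T = A.comp B}

theorem zero_mem_factoringThrough : (0 : X →L[R] Y) ∈ factoringThrough R Z X Y :=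
  ⟨0, 0, (zero_comp 0).symm⟩

theorem add_mem_factoringThrough [ContinuousAdd Y] (e : (Z × Z) ≃L[R] Z) {S T : X →L[R] Y}
    (hS : S ∈ factoringThrough R Z X Y) (hT : T ∈ factoringThrough R Z X Y) :
    S + T ∈ factoringThrough R Z X Y := by
  obtain ⟨A₁, B₁, rfl⟩ := hS
  obtain ⟨A₂, B₂, rfl⟩ := hT
  refine ⟨(A₁.comp (fst R Z Z) + A₂.comp (snd R Z Z)).comp (e.symm : Z →L[R] Z × Z),
    (e : Z × Z →L[R] Z).comp (B₁.prod B₂), ?_⟩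
  ext x
  simp

theorem comp_mem_factoringThrough_left (S : Y →L[R] W) {T : X →L[R] Y}
    (hT : T ∈ factoringThrough R Z X Y) : S.comp T ∈ factoringThrough R Z X W := by
  obtain ⟨A, B, rfl⟩ := hT
  exact ⟨S.comp A, B, (comp_assoc S A B).symm⟩

theorem comp_mem_factoringThrough_right {T : Y →L[R] W} (hT : T ∈ factoringThrough R Z Y W)
    (S : X →L[R] Y) : T.comp S ∈ factoringThrough R Z X W := by
  obtain ⟨A, B, rfl⟩ := hT
  exact ⟨A, B.comp S, comp_assoc A B S⟩

theorem exists_idempotent_equiv_range_of_comp_eq_id {A : Z →L[R] X} {C : X →L[R] Z}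
    (h : A.comp C = .id R X) :
    ∃ P : Z →L[R] Z, P.comp P = P ∧ Nonempty (X ≃L[R] LinearMap.range (P : Z →ₗ[R] Z)) := by
  have hAC (x : X) : A (C x) = x := DFunLike.congr_fun h x
  refine ⟨C.comp A, by ext z; simp [hAC], ⟨.equivOfInverse
    (C.codRestrict _ fun x => ⟨C x, by simp [hAC]⟩) (A.comp (Submodule.subtypeL _)) hAC ?_⟩⟩
  rintro ⟨_, z, rfl⟩
  exact Subtype.ext (congrArg C (hAC (A z)))

end Algebraic

section Normed

variable {𝕜 : Type*} [NontriviallyNormedField 𝕜]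
  {Z X Y W : Type*} [NormedAddCommGroup Z] [NormedSpace 𝕜 Z]
  [NormedAddCommGroup X] [NormedSpace 𝕜 X] [NormedAddCommGroup Y] [NormedSpace 𝕜 Y]
  [NormedAddCommGroup W] [NormedSpace 𝕜 W]

theorem add_mem_closure_factoringThrough (e : (Z × Z) ≃L[𝕜] Z) {S T : X →L[𝕜] Y}
    (hS : S ∈ closure (factoringThrough 𝕜 Z X Y)) (hT : T ∈ closure (factoringThrough 𝕜 Z X Y)) :
    S + T ∈ closure (factoringThrough 𝕜 Z X Y) :=
  map_mem_closure₂ continuous_add hS hT fun _ ha _ hb => add_mem_factoringThrough e ha hb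

theorem comp_mem_closure_factoringThrough_left (S : Y →L[𝕜] W) {T : X →L[𝕜] Y}
    (hT : T ∈ closure (factoringThrough 𝕜 Z X Y)) :
    S.comp T ∈ closure (factoringThrough 𝕜 Z X W) :=
  map_mem_closure (continuous_const.clm_comp continuous_id) hT fun _ h =>
    comp_mem_factoringThrough_left S h

theorem comp_mem_closure_factoringThrough_right {T : Y →L[𝕜] W}
    (hT : T ∈ closure (factoringThrough 𝕜 Z Y W)) (S : X →L[𝕜] Y) :
    T.comp S ∈ closure (factoringThrough 𝕜 Z X W) :=
  map_mem_closure (f := fun T' : Y →L[𝕜] W => T'.comp S)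
    (continuous_id.clm_comp continuous_const) hT fun _ h => comp_mem_factoringThrough_right h S

theorem exists_comp_eq_id_of_id_mem_closure_factoringThrough [CompleteSpace X]
    (h : ContinuousLinearMap.id 𝕜 X ∈ closure (factoringThrough 𝕜 Z X X)) :
    ∃ (A : Z →L[𝕜] X) (C : X →L[𝕜] Z), A.comp C = .id 𝕜 X := by
  obtain ⟨_, ⟨u, hu⟩, A, B, rfl⟩ := mem_closure_iff.1 h _ Units.isOpen isUnit_one
  refine ⟨A, B.comp (↑u⁻¹ : X →L[𝕜] X), ?_⟩
  rw [← comp_assoc, ← hu]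
  exact u.mul_inv

end Normed

end ContinuousLinearMap

theorem stmt12_general {X Z : Type*} [NormedAddCommGroup X] [NormedSpace ℝ X] [CompleteSpace X]
    [NormedAddCommGroup Z] [NormedSpace ℝ Z]
    (hZZ : Nonempty ((Z × Z) ≃L[ℝ] Z))
    (hXZ : ¬ ∃ P : Z →L[ℝ] Z, P.comp P = P ∧ Nonempty (X ≃L[ℝ] ↥(LinearMap.range (P : Z →ₗ[ℝ] Z)))) :
    (0 : X →L[ℝ] X) ∈
        closure {T : X →L[ℝ] X | ∃ (A : Z →L[ℝ] X) (B : X →L[ℝ] Z), T = A.comp B} ∧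
      (∀ S T : X →L[ℝ] X,
        S ∈ closure {T : X →L[ℝ] X | ∃ (A : Z →L[ℝ] X) (B : X →L[ℝ] Z), T = A.comp B} →
        T ∈ closure {T : X →L[ℝ] X | ∃ (A : Z →L[ℝ] X) (B : X →L[ℝ] Z), T = A.comp B} →
        S + T ∈ closure {T : X →L[ℝ] X | ∃ (A : Z →L[ℝ] X) (B : X →L[ℝ] Z), T = A.comp B}) ∧
      (∀ S T : X →L[ℝ] X,
        T ∈ closure {T : X →L[ℝ] X | ∃ (A : Z →L[ℝ] X) (B : X →L[ℝ] Z), T = A.comp B} →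
        S.comp T ∈ closure {T : X →L[ℝ] X | ∃ (A : Z →L[ℝ] X) (B : X →L[ℝ] Z), T = A.comp B} ∧
        T.comp S ∈ closure {T : X →L[ℝ] X | ∃ (A : Z →L[ℝ] X) (B : X →L[ℝ] Z), T = A.comp B}) ∧
      IsClosed (closure {T : X →L[ℝ] X | ∃ (A : Z →L[ℝ] X) (B : X →L[ℝ] Z), T = A.comp B}) ∧
      (ContinuousLinearMap.id ℝ X) ∉
        closure {T : X →L[ℝ] X | ∃ (A : Z →L[ℝ] X) (B : X →L[ℝ] Z), T = A.comp B} := by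
  obtain ⟨e⟩ := hZZ
  open ContinuousLinearMap in
  exact ⟨subset_closure zero_mem_factoringThrough,
    fun _ _ => add_mem_closure_factoringThrough e,
    fun S _ hT => ⟨comp_mem_closure_factoringThrough_left S hT,
      comp_mem_closure_factoringThrough_right hT S⟩,
    isClosed_closure,
    fun hid =>
      let ⟨_, _, hAC⟩ := exists_comp_eq_id_of_id_mem_closure_factoringThrough hid
      hXZ (exists_idempotent_equiv_range_of_comp_eq_id hAC)⟩

/-- If `X`, `Z` are infinite-dimensional Banach spaces with `Z ⊕ Z ≅ Z` and `X` not isomorphic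
to any complemented subspace of `Z`, then the closure of the set of operators on `X` factoring
through `Z` is a proper two-sided closed ideal of `L(X)`. -/
theorem stmt12 {X Z : Type*} [NormedAddCommGroup X] [NormedSpace ℝ X] [CompleteSpace X]
    [NormedAddCommGroup Z] [NormedSpace ℝ Z] [CompleteSpace Z]
    (hXinf : ¬ FiniteDimensional ℝ X) (hZinf : ¬ FiniteDimensional ℝ Z)
    (hZZ : Nonempty ((Z × Z) ≃L[ℝ] Z))
    (hXZ : ¬ ∃ P : Z →L[ℝ] Z, P.comp P = P ∧ Nonempty (X ≃L[ℝ] ↥(LinearMap.range (P : Z →ₗ[ℝ] Z)))) :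
    (0 : X →L[ℝ] X) ∈
        closure {T : X →L[ℝ] X | ∃ (A : Z →L[ℝ] X) (B : X →L[ℝ] Z), T = A.comp B} ∧
      (∀ S T : X →L[ℝ] X,
        S ∈ closure {T : X →L[ℝ] X | ∃ (A : Z →L[ℝ] X) (B : X →L[ℝ] Z), T = A.comp B} →
        T ∈ closure {T : X →L[ℝ] X | ∃ (A : Z →L[ℝ] X) (B : X →L[ℝ] Z), T = A.comp B} →
        S + T ∈ closure {T : X →L[ℝ] X | ∃ (A : Z →L[ℝ] X) (B : X →L[ℝ] Z), T = A.comp B}) ∧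
      (∀ S T : X →L[ℝ] X,
        T ∈ closure {T : X →L[ℝ] X | ∃ (A : Z →L[ℝ] X) (B : X →L[ℝ] Z), T = A.comp B} →
        S.comp T ∈ closure {T : X →L[ℝ] X | ∃ (A : Z →L[ℝ] X) (B : X →L[ℝ] Z), T = A.comp B} ∧
        T.comp S ∈ closure {T : X →L[ℝ] X | ∃ (A : Z →L[ℝ] X) (B : X →L[ℝ] Z), T = A.comp B}) ∧
      IsClosed (closure {T : X →L[ℝ] X | ∃ (A : Z →L[ℝ] X) (B : X →L[ℝ] Z), T = A.comp B}) ∧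
      (ContinuousLinearMap.id ℝ X) ∉
        closure {T : X →L[ℝ] X | ∃ (A : Z →L[ℝ] X) (B : X →L[ℝ] Z), T = A.comp B} :=
  stmt12_general hZZ hXZ
end

section
/- Let X be a Banach space such that the canonical image of X in its bidual X** is complemented in X**. Then for any free ultrafilter U on ℕ, the canonical (diagonal) copy of X in the ultrapower X^U is complemented in X^U. -/
open Filter

variable {X : Type*} [NormedAddCommGroup X] [NormedSpace ℝ X]

/-- The null subspace `N_U = {(x_n) ∈ ℓ_∞(X) : lim_U ‖x_n‖ = 0}`. -/
noncomputable def BWNull (X : Type*) [NormedAddCommGroup X] [NormedSpace ℝ X]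
    (U : Ultrafilter ℕ) : Submodule ℝ (lp (fun _ : ℕ => X) ⊤) where
  carrier := {f | Tendsto (fun n => ‖f n‖) (U : Filter ℕ) (nhds 0)}
  zero_mem' := by
    simp [lp.coeFn_zero]
  add_mem' := by
    intro f g hf hg
    have h : Tendsto (fun n => ‖f n‖ + ‖g n‖) (U : Filter ℕ) (nhds 0) := by
      simpa using hf.add hg
    refine squeeze_zero (fun n => norm_nonneg _) (fun n => ?_) h
    calc ‖(f + g) n‖ = ‖f n + g n‖ := by rw [lp.coeFn_add]; rfl
    _ ≤ ‖f n‖ + ‖g n‖ := norm_add_le _ _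
  smul_mem' := by
    intro c f hf
    have h : Tendsto (fun n => ‖c‖ * ‖f n‖) (U : Filter ℕ) (nhds (‖c‖ * 0)) := hf.const_mul _
    have heq : (fun n => ‖(c • f) n‖) = fun n => ‖c‖ * ‖f n‖ := by
      funext n
      rw [lp.coeFn_smul]
      simp [norm_smul]
    rw [Set.mem_setOf_eq, heq]
    simpa using h

/-- The ultrapower `X^U = ℓ_∞(X) / N_U`. -/
abbrev BWUltrapower (X : Type*) [NormedAddCommGroup X] [NormedSpace ℝ X] (U : Ultrafilter ℕ) :=
  lp (fun _ : ℕ => X) ⊤ ⧸ BWNull X U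

/-- The diagonal embedding `X → X^U`, `x ↦ (x, x, x, …)_U`. -/
noncomputable def BWdiag (U : Ultrafilter ℕ) (x : X) : BWUltrapower X U :=
  Submodule.Quotient.mk
    (⟨fun _ => x, memℓp_infty ⟨‖x‖, by rintro r ⟨n, rfl⟩; exact le_rfl⟩⟩ :
      lp (fun _ : ℕ => X) ⊤)

/-!
A bounded sequence `(xₙ)` in `X` has a weak-* limit along `U` in `X**`, namely
`φ ↦ lim_U φ(xₙ)`. This is a norm-one operator `ℓ_∞(X) → X**` that kills `N_U` and sends a
constant sequence `x` to `x ∈ X ⊆ X**`. Composed with the projection of `X**` onto `X` it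
descends to a bounded retraction `X^U → X` of the diagonal embedding, and the diagonal embedding
after this retraction is the required projection.
-/

open Topology NormedSpace

theorem ContinuousLinearMap.exists_projection_onto_range_of_leftInverse {R E F : Type*}
    [Semiring R] [TopologicalSpace E] [AddCommMonoid E] [Module R E]
    [TopologicalSpace F] [AddCommMonoid F] [Module R F]
    {j : E →L[R] F} {r : F →L[R] E} (h : Function.LeftInverse r j) :
    ∃ P : F →L[R] F, P.comp P = P ∧ Set.range P = Set.range j := by
  refine ⟨j.comp r, ?_, ?_⟩
  · ext y
    simp only [ContinuousLinearMap.comp_apply, h (r y)]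
  · refine Set.Subset.antisymm ?_ ?_
    · rintro _ ⟨y, rfl⟩
      exact ⟨r y, rfl⟩
    · rintro _ ⟨x, rfl⟩
      exact ⟨j x, by simp only [ContinuousLinearMap.comp_apply, h x]⟩

theorem ContinuousLinearMap.exists_leftInverse_of_norm_map {R E F : Type*} [Ring R]
    [NormedAddCommGroup E] [Module R E] [NormedAddCommGroup F] [Module R F]
    (j : E →L[R] F) {Q : F →L[R] F} (hQQ : Q.comp Q = Q) (hQ : Set.range Q = Set.range j)
    (hj : ∀ x, ‖j x‖ = ‖x‖) : ∃ r : F →L[R] E, Function.LeftInverse r j := by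
  let jᵢ : E →ₗᵢ[R] F := ⟨j, hj⟩
  have hQ_mem : ∀ y, Q y ∈ LinearMap.range jᵢ.toLinearMap := fun y =>
    show Q y ∈ Set.range j from hQ ▸ Set.mem_range_self y
  refine ⟨(jᵢ.equivRange.symm.toContinuousLinearEquiv : _ →L[R] E).comp
    (Q.codRestrict _ hQ_mem), fun x => ?_⟩
  have hQj : Q (j x) = j x := by
    obtain ⟨y, hy⟩ : j x ∈ Set.range Q := hQ ▸ ⟨x, rfl⟩
    rw [← hy, ← ContinuousLinearMap.comp_apply, hQQ]
  exact jᵢ.equivRange.symm_apply_eq.2 (Subtype.ext hQj)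

theorem IsCompact.exists_tendsto_ultrafilter {ι α : Type*} [TopologicalSpace α] {s : Set α}
    (hs : IsCompact s) (U : Ultrafilter ι) {u : ι → α} (hu : ∀ i, u i ∈ s) :
    ∃ a ∈ s, Tendsto u U (𝓝 a) :=
  hs.ultrafilter_le_nhds' (U.map u) (Filter.mem_map.2 (Eventually.of_forall hu))

namespace lp

variable {ι 𝕜 E : Type*} [NormedField 𝕜] [NormedAddCommGroup E] [NormedSpace 𝕜 E]

noncomputable def constL : E →L[𝕜] lp (fun _ : ι => E) ⊤ :=
  LinearMap.mkContinuous
    { toFun := fun x => ⟨fun _ => x, memℓp_infty ⟨‖x‖, by rintro r ⟨n, rfl⟩; exact le_rfl⟩⟩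
      map_add' := fun _ _ => rfl
      map_smul' := fun _ _ => rfl }
    1 fun x => by
      rw [one_mul]
      exact lp.norm_le_of_forall_le (norm_nonneg x) fun _ => le_rfl

end lp

section WeakStarUltralimit

variable {ι 𝕜 E : Type*} [RCLike 𝕜] [NormedAddCommGroup E] [NormedSpace 𝕜 E] (U : Ultrafilter ι)

theorem lp.tendsto_limUnder_apply (f : lp (fun _ : ι => E) ⊤) (φ : StrongDual 𝕜 E) :
    Tendsto (fun i => φ (f i)) U (𝓝 (limUnder (U : Filter ι) fun i => φ (f i))) := by
  have hmem : ∀ i, φ (f i) ∈ Metric.closedBall 0 (‖φ‖ * ‖f‖) := fun i => by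
    rw [mem_closedBall_zero_iff]
    exact φ.le_opNorm_of_le (lp.norm_apply_le_norm ENNReal.top_ne_zero f i)
  obtain ⟨a, -, ha⟩ := (isCompact_closedBall (0 : 𝕜) _).exists_tendsto_ultrafilter U hmem
  exact tendsto_nhds_limUnder ⟨a, ha⟩

noncomputable def weakStarUltralimit : lp (fun _ : ι => E) ⊤ →L[𝕜] StrongDual 𝕜 (StrongDual 𝕜 E) :=
  LinearMap.mkContinuous₂
    (LinearMap.mk₂ 𝕜 (fun f φ => limUnder (U : Filter ι) fun i => φ (f i))
      (fun f g φ => by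
        simpa only [lp.coeFn_add, Pi.add_apply, map_add] using
          ((lp.tendsto_limUnder_apply U f φ).add (lp.tendsto_limUnder_apply U g φ)).limUnder_eq)
      (fun c f φ => by
        simpa only [lp.coeFn_smul, Pi.smul_apply, map_smul, smul_eq_mul] using
          ((lp.tendsto_limUnder_apply U f φ).const_mul c).limUnder_eq)
      (fun f φ ψ => by
        simpa only [add_apply] using
          ((lp.tendsto_limUnder_apply U f φ).add (lp.tendsto_limUnder_apply U f ψ)).limUnder_eq)
      (fun c f φ => by
        simpa only [smul_apply, smul_eq_mul] using
          ((lp.tendsto_limUnder_apply U f φ).const_mul c).limUnder_eq))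
    1 fun f φ => by
      rw [one_mul, mul_comm ‖f‖]
      refine le_of_tendsto (lp.tendsto_limUnder_apply U f φ).norm (Eventually.of_forall fun i => ?_)
      exact φ.le_opNorm_of_le (lp.norm_apply_le_norm ENNReal.top_ne_zero f i)

theorem tendsto_weakStarUltralimit_apply (f : lp (fun _ : ι => E) ⊤) (φ : StrongDual 𝕜 E) :
    Tendsto (fun i => φ (f i)) U (𝓝 (weakStarUltralimit U f φ)) :=
  lp.tendsto_limUnder_apply U f φ

theorem weakStarUltralimit_apply_eq_of_tendsto {f : lp (fun _ : ι => E) ⊤} {φ : StrongDual 𝕜 E}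
    {a : 𝕜} (h : Tendsto (fun i => φ (f i)) U (𝓝 a)) : weakStarUltralimit U f φ = a :=
  tendsto_nhds_unique (tendsto_weakStarUltralimit_apply U f φ) h

theorem weakStarUltralimit_constL (x : E) :
    weakStarUltralimit U (lp.constL (𝕜 := 𝕜) x) = inclusionInDoubleDual 𝕜 E x := by
  ext φ
  exact weakStarUltralimit_apply_eq_of_tendsto U tendsto_const_nhds

theorem weakStarUltralimit_eq_zero_of_tendsto_norm {f : lp (fun _ : ι => E) ⊤}
    (hf : Tendsto (fun i => ‖f i‖) U (𝓝 0)) : weakStarUltralimit (𝕜 := 𝕜) U f = 0 := by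
  ext φ
  refine weakStarUltralimit_apply_eq_of_tendsto U (squeeze_zero_norm (fun i => φ.le_opNorm _) ?_)
  simpa using hf.const_mul ‖φ‖

end WeakStarUltralimit

theorem BWNull_le_ker_weakStarUltralimit (U : Ultrafilter ℕ) :
    BWNull X U ≤ (weakStarUltralimit (𝕜 := ℝ) U).ker := fun _ =>
  weakStarUltralimit_eq_zero_of_tendsto_norm U

noncomputable def BWdiagL (U : Ultrafilter ℕ) : X →L[ℝ] BWUltrapower X U :=
  (BWNull X U).mkQL.comp lp.constL

theorem coe_BWdiagL (U : Ultrafilter ℕ) : ⇑(BWdiagL (X := X) U) = BWdiag U := rfl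

theorem exists_leftInverse_BWdiagL {r : StrongDual ℝ (StrongDual ℝ X) →L[ℝ] X}
    (hr : Function.LeftInverse r (inclusionInDoubleDual ℝ X)) (U : Ultrafilter ℕ) :
    ∃ R : BWUltrapower X U →L[ℝ] X, Function.LeftInverse R (BWdiagL U) := by
  refine ⟨r.comp ((BWNull X U).liftQL _ (BWNull_le_ker_weakStarUltralimit U)), fun x => ?_⟩
  change r (weakStarUltralimit U (lp.constL x)) = x
  rw [weakStarUltralimit_constL]
  exact hr x

theorem stmt14_general (U : Ultrafilter ℕ)
    (h : ∃ Q : StrongDual ℝ (StrongDual ℝ X) →L[ℝ]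
        StrongDual ℝ (StrongDual ℝ X),
      Q.comp Q = Q ∧
        Set.range Q = Set.range (NormedSpace.inclusionInDoubleDual ℝ X)) :
    ∃ P : BWUltrapower X U →L[ℝ] BWUltrapower X U, P.comp P = P ∧
      Set.range P = Set.range (BWdiag (X := X) U) := by
  obtain ⟨Q, hQQ, hQ⟩ := h
  obtain ⟨r, hr⟩ := (inclusionInDoubleDual ℝ X).exists_leftInverse_of_norm_map
    (F := StrongDual ℝ (StrongDual ℝ X)) hQQ hQ (inclusionInDoubleDualLi ℝ).norm_map
  obtain ⟨R, hR⟩ := exists_leftInverse_BWdiagL hr U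
  rw [← coe_BWdiagL]
  exact ContinuousLinearMap.exists_projection_onto_range_of_leftInverse hR

/-- If the canonical image of `X` in `X**` is complemented, then for any free ultrafilter `U`
on `ℕ` the canonical (diagonal) copy of `X` in the ultrapower `X^U` is complemented. -/
theorem stmt14 [CompleteSpace X] (U : Ultrafilter ℕ) (hU : (U : Filter ℕ) ≤ Filter.cofinite)
    (h : ∃ Q : StrongDual ℝ (StrongDual ℝ X) →L[ℝ]
        StrongDual ℝ (StrongDual ℝ X),
      Q.comp Q = Q ∧
        Set.range Q = Set.range (NormedSpace.inclusionInDoubleDual ℝ X)) :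
    ∃ P : BWUltrapower X U →L[ℝ] BWUltrapower X U, P.comp P = P ∧
      Set.range P = Set.range (BWdiag (X := X) U) :=
  stmt14_general U h
end

section
/- Let 1 ≤ p < ∞, let w be an admissible Lorentz weight, and let (j_k) be a sequence of positive integers with J_k = Σ_{m≤k} m·j_m. Suppose there exist constants A, B > 0 such that for all k and all 1 ≤ i ≤ k: (i) w_i^(j_k) ≤ A w_i, and (ii) B w_i ≤ (1/W_{j_k}) Σ_{n=J_{k-1}+(i-1)j_k+1}^{J_{k-1}+i j_k} w_n. Then for every finitely supported double array of scalars (a_i^(k))_{1≤i≤k, k≥1}, B · Σ_k ‖(a_i^(k))_{i=1}^k‖_{d(w,p)}^p ≤ ‖Σ_k Σ_{i=1}^k a_i^(k) d_i^{(j_k), k}‖_{d(w,p)}^p ≤ A^p · Σ_k ‖(a_i^(k))_{i=1}^k‖_{d(w,p)}^p, where d_i^{(j_k), k} denotes the normalized constant-coefficient block of the d(w,p) unit vector basis of length j_k supported on coordinates J_{k-1}+(i-1)j_k+1 through J_{k-1}+i j_k. -/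
/-!
For finitely supported `f`, the supremum defining `‖f‖^p` is attained at the decreasing
rearrangement `c*` of `c = |f|^p`: along any permutation, the weights met by the `m` largest
values of `c` sum to at most `w_0 + ⋯ + w_{m-1}`, and Abel summation does the rest
(Hardy–Littlewood–Pólya).

The block vector equals `a_i^{(k)} W_{j_k}^{-1/p}` on the block `d_i^{(j_k),k}`. Upper bound: under
any arrangement, the `m` blocks of segment `k` with the largest coefficients occupy `m j_k`
distinct positions, hence carry weight at most `W_{m j_k} ≤ A W_{j_k} (w_0 + ⋯ + w_{m-1})` by (i);
majorization gives `A ‖(a_i^{(k)})_i‖^p` per segment, and `A ≤ A^p` since (i) at `i = k = 1`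
forces `A ≥ w_0 = 1`. Lower bound: reordering the blocks inside each segment so that their
coefficients decrease is an arrangement which, by (ii), carries at least
`B W_{j_k} w_r` on the `r`-th block.
-/

open Filter

/-- The Lorentz sequence space norm (coordinates indexed by `ℕ` starting at 0, so `w n` is the
paper's `w_{n+1}`): `‖f‖_{d(w,p)} = (sup_{π ∈ Perm ℕ} Σ_n |f(π n)|^p w_n)^{1/p}`. -/
noncomputable def lorentzNorm (w : ℕ → ℝ) (p : ℝ) (f : ℕ → ℝ) : ℝ :=
  (⨆ π : Equiv.Perm ℕ, ∑' n : ℕ, |f (π n)| ^ p * w n) ^ (1 / p)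

open Finset

theorem Antitone.sum_le_sum_range_card {M : Type*} [AddCommMonoid M] [PartialOrder M]
    [IsOrderedAddMonoid M] {w : ℕ → M} (hw : Antitone w) (s : Finset ℕ) :
    ∑ n ∈ s, w n ≤ ∑ i ∈ range #s, w i := by
  induction s using Finset.induction_on_max with
  | empty => simp
  | insert a s has ih =>
    have hsa : #s ≤ a := by
      simpa using card_le_card fun x hx => mem_range.2 (has x hx)
    rw [sum_insert fun h => (has a h).false, card_insert_of_notMem fun h => (has a h).false,
      sum_range_succ, add_comm]
    exact add_le_add ih (hw hsa)

theorem Antitone.sum_comp_le_sum_range_card {ι M : Type*} [AddCommMonoid M] [PartialOrder M]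
    [IsOrderedAddMonoid M] {w : ℕ → M} (hw : Antitone w)
    {D : Finset ι} {f : ι → ℕ} (hf : Set.InjOn f D) :
    ∑ x ∈ D, w (f x) ≤ ∑ i ∈ range #D, w i := by
  classical
  rw [← sum_image hf, ← card_image_of_injOn hf]
  exact hw.sum_le_sum_range_card _

theorem sum_mul_le_sum_mul_of_sum_range_le {x y z : ℕ → ℝ} {N : ℕ}
    (hx : ∀ i j, i ≤ j → j < N → x j ≤ x i) (hx0 : ∀ i < N, 0 ≤ x i)
    (hyz : ∀ m ≤ N, ∑ i ∈ range m, y i ≤ ∑ i ∈ range m, z i) :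
    ∑ i ∈ range N, x i * y i ≤ ∑ i ∈ range N, x i * z i := by
  induction N generalizing x with
  | zero => simp
  | succ N ih =>
    have hsplit : ∀ u : ℕ → ℝ, ∑ i ∈ range (N + 1), x i * u i =
        ∑ i ∈ range N, (x i - x N) * u i + x N * ∑ i ∈ range (N + 1), u i := by
      intro u
      rw [sum_range_succ, sum_range_succ, mul_add, mul_sum]
      simp only [sub_mul, sum_sub_distrib]
      ring
    rw [hsplit y, hsplit z]
    gcongr ?_ + ?_
    · exact ih (fun i j hij hj => sub_le_sub_right (hx i j hij (by omega)) _)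
        (fun i hi => sub_nonneg.2 (hx i N hi.le N.lt_succ_self))
        (fun m hm => hyz m (by omega))
    · exact mul_le_mul_of_nonneg_left (hyz _ le_rfl) (hx0 N N.lt_succ_self)

/-- A permutation of `ℕ`, the identity off `range N`, along which `c` decreases on `range N`. -/
noncomputable def sortDesc (c : ℕ → ℝ) (N : ℕ) : Equiv.Perm ℕ :=
  (Tuple.sort fun i : Fin N => OrderDual.toDual (c i)).extendDomain Fin.equivSubtype

section sortDesc

variable {c : ℕ → ℝ} {N n : ℕ}

theorem sortDesc_of_le (h : N ≤ n) : sortDesc c N n = n :=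
  Equiv.Perm.extendDomain_apply_not_subtype _ _ (not_lt.2 h)

theorem sortDesc_of_lt (h : n < N) :
    sortDesc c N n = (Tuple.sort fun i : Fin N => OrderDual.toDual (c i)) ⟨n, h⟩ := by
  rw [sortDesc, Equiv.Perm.extendDomain_apply_subtype (p := (· < N)) _ _ h]
  rfl

theorem sortDesc_lt (h : n < N) : sortDesc c N n < N := by
  rw [sortDesc_of_lt h]
  exact Fin.is_lt _

theorem sortDesc_anti {i i' : ℕ} (h : i ≤ i') (hi' : i' < N) :
    c (sortDesc c N i') ≤ c (sortDesc c N i) := by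
  rw [sortDesc_of_lt hi', sortDesc_of_lt (h.trans_lt hi')]
  exact Tuple.monotone_sort (fun i : Fin N => OrderDual.toDual (c i)) (Fin.mk_le_mk.2 h)

theorem sum_comp_sortDesc (f : ℕ → ℝ) :
    ∑ m ∈ range N, f (sortDesc c N m) = ∑ m ∈ range N, f m :=
  Equiv.Perm.sum_comp _ _ _ fun _ hm => mem_range.2 (not_le.1 fun h => hm (sortDesc_of_le h))

end sortDesc

/-- `∑_{r<N} c*_r w_r`, with `c*` the decreasing rearrangement of `c` on `range N`. -/
noncomputable def lorentzSum (w c : ℕ → ℝ) (N : ℕ) : ℝ :=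
  ∑ r ∈ range N, c (sortDesc c N r) * w r

section lorentzSum

variable {w c : ℕ → ℝ} {N : ℕ}

theorem lorentzSum_nonneg (hw0 : ∀ n, 0 ≤ w n) (hc : ∀ n, 0 ≤ c n) : 0 ≤ lorentzSum w c N :=
  sum_nonneg fun r _ => mul_nonneg (hc _) (hw0 r)

theorem lorentzSum_congr {c' : ℕ → ℝ} (h : ∀ n < N, c n = c' n) :
    lorentzSum w c N = lorentzSum w c' N := by
  have hσ : sortDesc c N = sortDesc c' N := by
    simp only [sortDesc, h _ (Fin.is_lt _)]
  rw [lorentzSum, lorentzSum, hσ]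
  exact sum_congr rfl fun r hr => by rw [h _ (sortDesc_lt (mem_range.1 hr))]

theorem sum_mul_le_sum_sortDesc_mul {y z : ℕ → ℝ} (hc : ∀ n, 0 ≤ c n)
    (hyz : ∀ t ⊆ range N, ∑ i ∈ t, y i ≤ ∑ r ∈ range #t, z r) :
    ∑ m ∈ range N, c m * y m ≤ ∑ r ∈ range N, c (sortDesc c N r) * z r := by
  rw [← sum_comp_sortDesc (c := c) fun m => c m * y m]
  refine sum_mul_le_sum_mul_of_sum_range_le (fun i i' h hi' => sortDesc_anti h hi')
    (fun i _ => hc _) fun m hm => ?_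
  have hsub : (range m).map (sortDesc c N).toEmbedding ⊆ range N := fun n hn => by
    obtain ⟨r, hr, rfl⟩ := mem_map.1 hn
    exact mem_range.2 (sortDesc_lt ((mem_range.1 hr).trans_le hm))
  simpa using hyz _ hsub

theorem sum_mul_le_lorentzSum {ι : Type*} (hw : Antitone w) (hw0 : ∀ n, 0 ≤ w n)
    (hc : ∀ n, 0 ≤ c n) {D : Finset ι} {φ ψ : ι → ℕ} (hφ : Set.MapsTo φ D (range N))
    (hφi : Set.InjOn φ D) (hψ : Set.InjOn ψ D) :
    ∑ x ∈ D, c (φ x) * w (ψ x) ≤ lorentzSum w c N := by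
  rw [← sum_fiberwise_of_maps_to hφ]
  have hfib : ∀ m ∈ range N, ∑ x ∈ D with φ x = m, c (φ x) * w (ψ x) =
      c m * ∑ x ∈ D with φ x = m, w (ψ x) := fun m _ => by
    rw [mul_sum]
    exact sum_congr rfl fun x hx => by rw [(mem_filter.1 hx).2]
  rw [sum_congr rfl hfib]
  refine sum_mul_le_sum_sortDesc_mul hc fun t _ => ?_
  have hfilter : ∑ i ∈ t, ∑ x ∈ D with φ x = i, w (ψ x) = ∑ x ∈ D with φ x ∈ t, w (ψ x) := by
    rw [← sum_fiberwise_of_maps_to (fun x hx => (mem_filter.1 hx).2)]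
    refine sum_congr rfl fun i hi => ?_
    rw [filter_filter]
    exact sum_congr (filter_congr fun x _ => ⟨fun h => ⟨h ▸ hi, h⟩, And.right⟩) fun _ _ => rfl
  rw [hfilter]
  have hcard : #(D.filter (φ · ∈ t)) ≤ #t :=
    card_le_card_of_injOn φ (fun x hx => (mem_filter.1 hx).2)
      (hφi.mono fun x hx => (mem_filter.1 hx).1)
  calc ∑ x ∈ D with φ x ∈ t, w (ψ x)
      ≤ ∑ i ∈ range #(D.filter (φ · ∈ t)), w i :=
        hw.sum_comp_le_sum_range_card (hψ.mono fun x hx => (mem_filter.1 hx).1)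
    _ ≤ ∑ i ∈ range #t, w i :=
        sum_le_sum_of_subset_of_nonneg (range_subset_range.2 hcard) fun i _ _ => hw0 i

theorem lorentzNorm_rpow_eq_lorentzSum (hw : Antitone w) (hw0 : ∀ n, 0 ≤ w n) {p : ℝ}
    (hp : 0 < p) {f : ℕ → ℝ} (hf : ∀ n, N ≤ n → f n = 0) :
    lorentzNorm w p f ^ p = lorentzSum w (fun n => |f n| ^ p) N := by
  set c : ℕ → ℝ := fun n => |f n| ^ p
  have hc : ∀ n, 0 ≤ c n := fun n => by positivity
  have hcN : ∀ n ∉ range N, c n = 0 := fun n hn => by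
    simp [c, hf n (not_lt.1 (mem_range.not.1 hn)), hp.ne']
  have hperm : ∀ π : Equiv.Perm ℕ, ∑' n, c (π n) * w n ≤ lorentzSum w c N := fun π => by
    rw [← π.symm.tsum_eq, tsum_eq_sum (s := range N) fun m hm => by simp [hcN m hm]]
    simpa using sum_mul_le_lorentzSum hw hw0 hc (φ := id) (Set.mapsTo_id _)
      (Set.injOn_id _) π.symm.injective.injOn
  have hsort : ∑' n, c (sortDesc c N n) * w n = lorentzSum w c N :=
    tsum_eq_sum fun n hn => by rw [sortDesc_of_le (not_lt.1 (mem_range.not.1 hn)), hcN n hn,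
      zero_mul]
  have hsup : ⨆ π : Equiv.Perm ℕ, ∑' n, c (π n) * w n = lorentzSum w c N :=
    le_antisymm (ciSup_le hperm) (hsort ▸ le_ciSup ⟨_, Set.forall_mem_range.2 hperm⟩ _)
  rw [lorentzNorm, hsup, one_div, Real.rpow_inv_rpow (lorentzSum_nonneg hw0 hc) hp.ne']

end lorentzSum

theorem Nat.add_mul_add_mem_Ico_iff {a i s t q : ℕ} (hs : s < q) :
    a + i * q + s ∈ Ico (a + t * q) (a + (t + 1) * q) ↔ i = t := by
  rw [mem_Ico]
  constructor
  · rintro ⟨h1, h2⟩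
    have hti : t * q < (i + 1) * q := by rw [add_one_mul]; omega
    have hit : i * q < (t + 1) * q := by omega
    have := Nat.lt_of_mul_lt_mul_right hti
    have := Nat.lt_of_mul_lt_mul_right hit
    omega
  · rintro rfl
    rw [add_one_mul]
    omega

theorem Nat.eq_of_mul_add_eq_mul_add {i i' s s' q : ℕ} (hs : s < q) (hs' : s' < q)
    (h : i * q + s = i' * q + s') : i = i' ∧ s = s' := by
  have hi : i' = i := (Nat.add_mul_add_mem_Ico_iff (a := 0) hs').1 (by
    simp only [zero_add]; rw [← h, mem_Ico, add_one_mul]; omega)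
  subst hi
  omega

theorem sum_range_mul {M : Type*} [AddCommMonoid M] (f : ℕ → M) (m q : ℕ) :
    ∑ n ∈ range (m * q), f n = ∑ i ∈ range m, ∑ s ∈ range q, f (i * q + s) := by
  induction m with
  | zero => simp
  | succ m ih => rw [add_one_mul, sum_range_add, ih, sum_range_succ]

theorem sum_Ico_add_mul {M : Type*} [AddCommMonoid M] (f : ℕ → M) (a r q : ℕ) :
    ∑ n ∈ Ico (a + r * q) (a + (r + 1) * q), f n = ∑ s ∈ range q, f (a + r * q + s) := by
  rw [sum_Ico_eq_sum_range, add_one_mul, ← add_assoc, Nat.add_sub_cancel_left]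

theorem sum_mul_sum_range_comp_le {w c : ℕ → ℝ} {N q : ℕ} {A : ℝ} (hw : Antitone w)
    (hc : ∀ n, 0 ≤ c n) {u : ℕ → ℕ} (hu : Function.Injective u)
    (hA : ∀ r < N, ∑ s ∈ range q, w (r * q + s) ≤ A * w r * ∑ s ∈ range q, w s) :
    ∑ i ∈ range N, c i * ∑ s ∈ range q, w (u (i * q + s)) ≤
      A * (∑ s ∈ range q, w s) * lorentzSum w c N := by
  have hmaj : ∑ i ∈ range N, c i * ∑ s ∈ range q, w (u (i * q + s)) ≤
      ∑ r ∈ range N, c (sortDesc c N r) * ∑ s ∈ range q, w (r * q + s) := by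
    refine sum_mul_le_sum_sortDesc_mul hc fun t _ => ?_
    have hinj : Set.InjOn (fun x : ℕ × ℕ => u (x.1 * q + x.2)) ↑(t ×ˢ range q) :=
      fun x hx x' hx' h => by
        simp only [coe_product, Set.mem_prod, mem_coe, mem_range] at hx hx'
        obtain ⟨h1, h2⟩ := Nat.eq_of_mul_add_eq_mul_add hx.2 hx'.2 (hu h)
        exact Prod.ext h1 h2
    rw [← sum_range_mul, ← sum_product' (f := fun i s => w (u (i * q + s))),
      show #t * q = #(t ×ˢ range q) by simp]
    exact hw.sum_comp_le_sum_range_card hinj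
  refine hmaj.trans ((sum_le_sum fun r hr =>
    mul_le_mul_of_nonneg_left (hA r (mem_range.1 hr)) (hc _)).trans_eq ?_)
  rw [lorentzSum, mul_sum]
  exact sum_congr rfl fun r _ => by ring

theorem sum_range_pos {w : ℕ → ℝ} (hw : ∀ n, 0 < w n) {q : ℕ} (hq : 1 ≤ q) :
    0 < ∑ n ∈ range q, w n :=
  sum_pos (fun n _ => hw n) (nonempty_range_iff.2 (by omega))

/-- The paper's `J_k`: coordinates `[J_{k-1}, J_k)` carry the `k` blocks of length `j_k`. -/
def blockOffset (j : ℕ → ℕ) (k : ℕ) : ℕ := ∑ m ∈ Icc 1 k, m * j m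

section blockOffset

variable {j : ℕ → ℕ}

theorem blockOffset_succ (k : ℕ) :
    blockOffset j (k + 1) = blockOffset j k + (k + 1) * j (k + 1) :=
  sum_Icc_succ_top (by omega) _

theorem blockOffset_eq_pred_add {k : ℕ} (hk : 1 ≤ k) :
    blockOffset j k = blockOffset j (k - 1) + k * j k := by
  obtain ⟨k, rfl⟩ := Nat.exists_eq_add_of_le' hk
  exact blockOffset_succ k

theorem blockOffset_mono : Monotone (blockOffset j) :=
  monotone_nat_of_le_succ fun k => by rw [blockOffset_succ]; omega

theorem mem_Ico_blockOffset {k i s : ℕ} (hk : 1 ≤ k) (hi : i < k) (hs : s < j k) :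
    blockOffset j (k - 1) + i * j k + s ∈ Ico (blockOffset j (k - 1)) (blockOffset j k) := by
  have : (i + 1) * j k ≤ k * j k := Nat.mul_le_mul_right _ hi
  rw [add_one_mul] at this
  rw [mem_Ico, blockOffset_eq_pred_add hk]
  omega

theorem eq_of_mem_Ico_blockOffset {k k' n : ℕ} (hk : 1 ≤ k) (hk' : 1 ≤ k')
    (hn : n ∈ Ico (blockOffset j (k - 1)) (blockOffset j k))
    (hn' : n ∈ Ico (blockOffset j (k' - 1)) (blockOffset j k')) : k = k' := by
  rw [mem_Ico] at hn hn'
  by_contra hne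
  rcases Nat.lt_or_gt_of_ne hne with h | h
  · have := blockOffset_mono (j := j) (show k ≤ k' - 1 by omega); omega
  · have := blockOffset_mono (j := j) (show k' ≤ k - 1 by omega); omega

theorem sum_range_blockOffset (F : ℕ → ℝ) (K : ℕ) :
    ∑ n ∈ range (blockOffset j K), F n = ∑ k ∈ Icc 1 K, ∑ i ∈ range k, ∑ s ∈ range (j k),
      F (blockOffset j (k - 1) + i * j k + s) := by
  induction K with
  | zero => simp [blockOffset]
  | succ K ih =>
    rw [blockOffset_succ, sum_range_add, ih, sum_Icc_succ_top (by omega), sum_range_mul]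
    simp only [Nat.add_sub_cancel, add_assoc]

theorem Ico_block_subset_Ico_blockOffset {k i : ℕ} (hi : 1 ≤ i) (hik : i ≤ k) :
    Ico (blockOffset j (k - 1) + (i - 1) * j k) (blockOffset j (k - 1) + i * j k) ⊆
      Ico (blockOffset j (k - 1)) (blockOffset j k) := by
  have : i * j k ≤ k * j k := Nat.mul_le_mul_right _ hik
  rw [blockOffset_eq_pred_add (hi.trans hik)]
  exact Ico_subset_Ico (by omega) (by omega)

end blockOffset

def blockIndices (j : ℕ → ℕ) (K : ℕ) : Finset (Σ _ : ℕ, ℕ × ℕ) :=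
  (Icc 1 K).sigma fun k => range k ×ˢ range (j k)

/-- For `x = ⟨k, i, s⟩`, the coordinate of entry `s` of the block `d_{i+1}^{(j_k),k}`
(`i` and `s` are `0`-based). -/
def blockIndex (j : ℕ → ℕ) (x : Σ _ : ℕ, ℕ × ℕ) : ℕ :=
  blockOffset j (x.1 - 1) + x.2.1 * j x.1 + x.2.2

section blockIndex

variable {j : ℕ → ℕ} {K : ℕ}

theorem mem_blockIndices {x : Σ _ : ℕ, ℕ × ℕ} :
    x ∈ blockIndices j K ↔ (1 ≤ x.1 ∧ x.1 ≤ K) ∧ x.2.1 < x.1 ∧ x.2.2 < j x.1 := by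
  simp [blockIndices]

theorem sum_blockIndices (F : (Σ _ : ℕ, ℕ × ℕ) → ℝ) :
    ∑ x ∈ blockIndices j K, F x = ∑ k ∈ Icc 1 K, ∑ i ∈ range k, ∑ s ∈ range (j k), F ⟨k, i, s⟩ := by
  rw [blockIndices, sum_sigma]
  exact sum_congr rfl fun k _ => sum_product _ _ _

theorem mapsTo_blockIndex :
    Set.MapsTo (blockIndex j) (blockIndices j K) (range (blockOffset j K)) := fun x hx => by
  rw [mem_coe, mem_blockIndices] at hx
  have := mem_Ico.1 (mem_Ico_blockOffset hx.1.1 hx.2.1 hx.2.2)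
  exact mem_range.2 (this.2.trans_le (blockOffset_mono hx.1.2))

theorem injOn_blockIndex : Set.InjOn (blockIndex j) (blockIndices j K) := by
  rintro ⟨k, i, s⟩ hx ⟨k', i', s'⟩ hx' h
  simp only [mem_coe, mem_blockIndices] at hx hx'
  replace h : blockOffset j (k - 1) + i * j k + s = blockOffset j (k' - 1) + i' * j k' + s' := h
  have hseg' := mem_Ico_blockOffset hx'.1.1 hx'.2.1 hx'.2.2
  rw [← h] at hseg'
  obtain rfl : k = k' :=
    eq_of_mem_Ico_blockOffset hx.1.1 hx'.1.1 (mem_Ico_blockOffset hx.1.1 hx.2.1 hx.2.2) hseg'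
  obtain ⟨rfl, rfl⟩ := Nat.eq_of_mul_add_eq_mul_add hx.2.2 hx'.2.2 (by simpa [add_assoc] using h)
  rfl

noncomputable def sortBlocks (c : ℕ → ℕ → ℝ) (x : Σ _ : ℕ, ℕ × ℕ) : Σ _ : ℕ, ℕ × ℕ :=
  ⟨x.1, sortDesc (c x.1) x.1 x.2.1, x.2.2⟩

theorem mapsTo_sortBlocks {c : ℕ → ℕ → ℝ} :
    Set.MapsTo (sortBlocks c) (blockIndices j K) (blockIndices j K) := fun x hx => by
  simp only [mem_coe, mem_blockIndices] at hx ⊢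
  exact ⟨hx.1, sortDesc_lt hx.2.1, hx.2.2⟩

theorem injOn_sortBlocks {c : ℕ → ℕ → ℝ} : Set.InjOn (sortBlocks c) (blockIndices j K) := by
  rintro ⟨k, i, s⟩ - ⟨k', i', s'⟩ - h
  simp only [sortBlocks, Sigma.mk.inj_iff] at h
  obtain ⟨rfl, h⟩ := h
  simp only [heq_eq_eq, Prod.mk.injEq, EmbeddingLike.apply_eq_iff_eq] at h
  rw [h.1, h.2]

end blockIndex

/-- `∑_{k ≤ K} ∑_{i ≤ k} a_i^{(k)} d_i^{(j_k),k}`, with `J = blockOffset j`. -/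
noncomputable def blockVector (w : ℕ → ℝ) (p : ℝ) (j : ℕ → ℕ) (K : ℕ) (a : ℕ → ℕ → ℝ)
    (n : ℕ) : ℝ :=
  ∑ k ∈ Icc 1 K, ∑ i ∈ Icc 1 k, a k i *
    (if n ∈ Ico (blockOffset j (k - 1) + (i - 1) * j k) (blockOffset j (k - 1) + i * j k) then
      (∑ m ∈ range (j k), w m) ^ (-(1 / p)) else 0)

section blockVector

variable {w : ℕ → ℝ} {p : ℝ} {j : ℕ → ℕ} {K : ℕ} {a : ℕ → ℕ → ℝ}

theorem blockVector_of_le {n : ℕ} (hn : blockOffset j K ≤ n) : blockVector w p j K a n = 0 :=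
  sum_eq_zero fun k hk => sum_eq_zero fun i hi => by
    rw [mem_Icc] at hk hi
    rw [if_neg fun h => ?_, mul_zero]
    have := (mem_Ico.1 (Ico_block_subset_Ico_blockOffset hi.1 hi.2 h)).2
    have := blockOffset_mono (j := j) hk.2
    omega

theorem blockVector_apply {k i s : ℕ} (hk : 1 ≤ k) (hkK : k ≤ K) (hi : i < k) (hs : s < j k) :
    blockVector w p j K a (blockOffset j (k - 1) + i * j k + s) =
      a k (i + 1) * (∑ m ∈ range (j k), w m) ^ (-(1 / p)) := by
  have hseg := mem_Ico_blockOffset hk hi hs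
  rw [blockVector, sum_eq_single_of_mem k (mem_Icc.2 ⟨hk, hkK⟩),
    sum_eq_single_of_mem (i + 1) (mem_Icc.2 ⟨by omega, hi⟩), if_pos (by
      simpa using (Nat.add_mul_add_mem_Ico_iff hs).2 rfl)]
  · intro i' hi' hne
    obtain ⟨t, rfl⟩ := Nat.exists_eq_add_of_le' (mem_Icc.1 hi').1
    rw [if_neg fun h => hne ?_, mul_zero]
    rw [Nat.add_sub_cancel] at h
    rw [(Nat.add_mul_add_mem_Ico_iff hs).1 h]
  · intro k' hk' hne
    rw [mem_Icc] at hk'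
    refine sum_eq_zero fun i' hi' => ?_
    rw [mem_Icc] at hi'
    rw [if_neg fun h => hne ?_, mul_zero]
    exact eq_of_mem_Ico_blockOffset hk'.1 hk (Ico_block_subset_Ico_blockOffset hi'.1 hi'.2 h) hseg

theorem abs_blockVector_rpow (hw0 : ∀ n, 0 ≤ w n) (hp : p ≠ 0) {k i s : ℕ} (hk : 1 ≤ k)
    (hkK : k ≤ K) (hi : i < k) (hs : s < j k) :
    |blockVector w p j K a (blockOffset j (k - 1) + i * j k + s)| ^ p =
      |a k (i + 1)| ^ p * (∑ m ∈ range (j k), w m)⁻¹ := by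
  have hW : 0 ≤ ∑ m ∈ range (j k), w m := sum_nonneg fun m _ => hw0 m
  rw [blockVector_apply hk hkK hi hs, abs_mul, Real.mul_rpow (abs_nonneg _) (abs_nonneg _),
    abs_of_nonneg (Real.rpow_nonneg hW _), ← Real.rpow_mul hW, neg_mul, one_div,
    inv_mul_cancel₀ hp, Real.rpow_neg_one]

theorem sum_abs_blockVector_rpow_mul (hw0 : ∀ n, 0 ≤ w n) (hp : p ≠ 0) (v : ℕ → ℕ) :
    ∑ n ∈ range (blockOffset j K), |blockVector w p j K a n| ^ p * w (v n) =
      ∑ k ∈ Icc 1 K, (∑ s ∈ range (j k), w s)⁻¹ * ∑ i ∈ range k, |a k (i + 1)| ^ p *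
        ∑ s ∈ range (j k), w (v (blockOffset j (k - 1) + (i * j k + s))) := by
  rw [sum_range_blockOffset]
  refine sum_congr rfl fun k hk => ?_
  rw [mem_Icc] at hk
  simp only [mul_sum]
  refine sum_congr rfl fun i hi => sum_congr rfl fun s hs => ?_
  rw [abs_blockVector_rpow hw0 hp hk.1 hk.2 (mem_range.1 hi) (mem_range.1 hs), add_assoc]
  ring

theorem lorentzSum_blockVector_le (hw : Antitone w) (hwpos : ∀ n, 0 < w n) (hp : 0 < p)
    (hj : ∀ k, 1 ≤ k → 1 ≤ j k) {A : ℝ}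
    (hA : ∀ k, 1 ≤ k → ∀ i, 1 ≤ i → i ≤ k →
      (∑ n ∈ Ico ((i - 1) * j k) (i * j k), w n) / (∑ n ∈ range (j k), w n) ≤ A * w (i - 1)) :
    lorentzSum w (fun n => |blockVector w p j K a n| ^ p) (blockOffset j K) ≤
      A * ∑ k ∈ Icc 1 K, lorentzSum w (fun i => |a k (i + 1)| ^ p) k := by
  set G : ℕ → ℝ := fun n => |blockVector w p j K a n| ^ p
  set σ := sortDesc G (blockOffset j K) with hσ
  clear_value σ
  have hW : ∀ k, 1 ≤ k → 0 < ∑ s ∈ range (j k), w s := fun k hk => sum_range_pos hwpos (hj k hk)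
  have hblock : ∀ k ∈ Icc 1 K, ∑ i ∈ range k, |a k (i + 1)| ^ p *
      ∑ s ∈ range (j k), w (σ.symm (blockOffset j (k - 1) + (i * j k + s))) ≤
      A * (∑ s ∈ range (j k), w s) * lorentzSum w (fun i => |a k (i + 1)| ^ p) k := by
    intro k hk
    rw [mem_Icc] at hk
    refine sum_mul_sum_range_comp_le (u := fun n => σ.symm (blockOffset j (k - 1) + n)) hw
      (fun i => by positivity) (σ.symm.injective.comp (add_right_injective _)) fun r hr => ?_
    have := hA k hk.1 (r + 1) (by omega) (by omega)
    rw [Nat.add_sub_cancel, div_le_iff₀ (hW k hk.1), ← zero_add (r * j k),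
      ← zero_add ((r + 1) * j k), sum_Ico_add_mul] at this
    simpa using this
  calc lorentzSum w G (blockOffset j K)
      = ∑ n ∈ range (blockOffset j K), G n * w (σ.symm n) := by
        rw [lorentzSum, ← sum_comp_sortDesc (c := G) fun n => G n * w (σ.symm n), ← hσ]
        simp
    _ ≤ ∑ k ∈ Icc 1 K, (∑ s ∈ range (j k), w s)⁻¹ *
          (A * (∑ s ∈ range (j k), w s) * lorentzSum w (fun i => |a k (i + 1)| ^ p) k) := by
        rw [sum_abs_blockVector_rpow_mul (fun n => (hwpos n).le) hp.ne']
        exact sum_le_sum fun k hk => mul_le_mul_of_nonneg_left (hblock k hk)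
          (inv_nonneg.2 (hW k (mem_Icc.1 hk).1).le)
    _ = A * ∑ k ∈ Icc 1 K, lorentzSum w (fun i => |a k (i + 1)| ^ p) k := by
        rw [mul_sum]
        exact sum_congr rfl fun k hk => by field_simp [(hW k (mem_Icc.1 hk).1).ne']

theorem le_lorentzSum_blockVector (hw : Antitone w) (hw0 : ∀ n, 0 ≤ w n) (hp : 0 < p) {B : ℝ}
    (hB : ∀ k, 1 ≤ k → ∀ i, 1 ≤ i → i ≤ k →
      B * w (i - 1) ≤
        (∑ n ∈ Ico (blockOffset j (k - 1) + (i - 1) * j k) (blockOffset j (k - 1) + i * j k),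
          w n) / (∑ n ∈ range (j k), w n)) :
    B * ∑ k ∈ Icc 1 K, lorentzSum w (fun i => |a k (i + 1)| ^ p) k ≤
      lorentzSum w (fun n => |blockVector w p j K a n| ^ p) (blockOffset j K) := by
  set c : ℕ → ℕ → ℝ := fun k i => |a k (i + 1)| ^ p
  have hblock : ∀ k ∈ Icc 1 K, ∀ r ∈ range k,
      B * (c k (sortDesc (c k) k r) * w r) ≤ c k (sortDesc (c k) k r) *
        ((∑ s ∈ range (j k), w (blockOffset j (k - 1) + r * j k + s)) /
          ∑ s ∈ range (j k), w s) := by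
    intro k hk r hr
    rw [mem_Icc] at hk
    rw [mem_range] at hr
    have := hB k hk.1 (r + 1) (by omega) (by omega)
    rw [Nat.add_sub_cancel, sum_Ico_add_mul] at this
    rw [mul_left_comm]
    exact mul_le_mul_of_nonneg_left this (by positivity)
  calc B * ∑ k ∈ Icc 1 K, lorentzSum w (c k) k
      ≤ ∑ k ∈ Icc 1 K, ∑ r ∈ range k, c k (sortDesc (c k) k r) *
          ((∑ s ∈ range (j k), w (blockOffset j (k - 1) + r * j k + s)) /
            ∑ s ∈ range (j k), w s) := by
        rw [mul_sum]
        refine sum_le_sum fun k hk => ?_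
        rw [lorentzSum, mul_sum]
        exact sum_le_sum (hblock k hk)
    _ = ∑ x ∈ blockIndices j K,
          |blockVector w p j K a (blockIndex j (sortBlocks c x))| ^ p * w (blockIndex j x) := by
        rw [sum_blockIndices]
        refine sum_congr rfl fun k hk => sum_congr rfl fun r hr => ?_
        rw [mem_Icc] at hk
        rw [div_eq_mul_inv, sum_mul, mul_sum]
        refine sum_congr rfl fun s hs => ?_
        simp only [sortBlocks, blockIndex]
        rw [abs_blockVector_rpow hw0 hp.ne' hk.1 hk.2 (sortDesc_lt (mem_range.1 hr))
          (mem_range.1 hs)]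
        simp only [c]
        ring
    _ ≤ lorentzSum w (fun n => |blockVector w p j K a n| ^ p) (blockOffset j K) :=
        sum_mul_le_lorentzSum (c := fun n => |blockVector w p j K a n| ^ p) hw hw0
          (fun n => by positivity) (mapsTo_blockIndex.comp mapsTo_sortBlocks)
          (injOn_blockIndex.comp injOn_sortBlocks mapsTo_sortBlocks) injOn_blockIndex

end blockVector

theorem stmt17_general (p : ℝ) (hp : 1 ≤ p) (w : ℕ → ℝ) (hw1 : w 0 = 1) (hwpos : ∀ n, 0 < w n)
    (hwmono : Antitone w)
    (j : ℕ → ℕ) (hjpos : ∀ k, 1 ≤ k → 1 ≤ j k)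
    (J : ℕ → ℕ) (hJ : ∀ k, J k = ∑ m ∈ Finset.Icc 1 k, m * j m)
    (A B : ℝ)
    (hi : ∀ k, 1 ≤ k → ∀ i, 1 ≤ i → i ≤ k →
      (∑ n ∈ Finset.Ico ((i - 1) * j k) (i * j k), w n) /
          (∑ n ∈ Finset.range (j k), w n) ≤ A * w (i - 1))
    (hii : ∀ k, 1 ≤ k → ∀ i, 1 ≤ i → i ≤ k →
      B * w (i - 1) ≤
        (∑ n ∈ Finset.Ico (J (k - 1) + (i - 1) * j k) (J (k - 1) + i * j k), w n) /
          (∑ n ∈ Finset.range (j k), w n))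
    (K : ℕ) (a : ℕ → ℕ → ℝ) :
    B * ∑ k ∈ Finset.Icc 1 K,
        lorentzNorm w p (fun i => if i + 1 ≤ k then a k (i + 1) else 0) ^ p ≤
      lorentzNorm w p (fun n => ∑ k ∈ Finset.Icc 1 K, ∑ i ∈ Finset.Icc 1 k,
        a k i * (if n ∈ Finset.Ico (J (k - 1) + (i - 1) * j k) (J (k - 1) + i * j k) then
          (∑ m ∈ Finset.range (j k), w m) ^ (-(1 / p)) else 0)) ^ p ∧
    lorentzNorm w p (fun n => ∑ k ∈ Finset.Icc 1 K, ∑ i ∈ Finset.Icc 1 k,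
        a k i * (if n ∈ Finset.Ico (J (k - 1) + (i - 1) * j k) (J (k - 1) + i * j k) then
          (∑ m ∈ Finset.range (j k), w m) ^ (-(1 / p)) else 0)) ^ p ≤
      A ^ p * ∑ k ∈ Finset.Icc 1 K,
        lorentzNorm w p (fun i => if i + 1 ≤ k then a k (i + 1) else 0) ^ p := by
  obtain rfl : J = blockOffset j := funext hJ
  have hp0 : 0 < p := by linarith
  have hw0 : ∀ n, 0 ≤ w n := fun n => (hwpos n).le
  have hrow : ∀ k, lorentzNorm w p (fun i => if i + 1 ≤ k then a k (i + 1) else 0) ^ p =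
      lorentzSum w (fun i => |a k (i + 1)| ^ p) k := fun k => by
    rw [lorentzNorm_rpow_eq_lorentzSum (N := k) hwmono hw0 hp0 fun n hn => if_neg (by omega)]
    exact lorentzSum_congr fun n hn => by rw [if_pos (by omega)]
  have hA : 1 ≤ A := by
    simpa [hw1, div_self (sum_range_pos hwpos (hjpos 1 le_rfl)).ne'] using
      hi 1 le_rfl 1 le_rfl le_rfl
  simp only [hrow]
  change _ ≤ lorentzNorm w p (blockVector w p j K a) ^ p ∧
    lorentzNorm w p (blockVector w p j K a) ^ p ≤ _
  rw [lorentzNorm_rpow_eq_lorentzSum hwmono hw0 hp0 fun n hn => blockVector_of_le hn]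
  refine ⟨le_lorentzSum_blockVector hwmono hw0 hp0 hii,
    (lorentzSum_blockVector_le hwmono hwpos hp0 hjpos hi).trans ?_⟩
  refine mul_le_mul_of_nonneg_right ?_ (sum_nonneg fun k _ => lorentzSum_nonneg hw0 fun i => ?_)
  · simpa using Real.rpow_le_rpow_of_exponent_le hA hp
  · positivity

/-- Lemma (block equivalence): under the two weight estimates (i) `w_i^{(j_k)} ≤ A w_i` and
(ii) `B w_i ≤ (1/W_{j_k}) Σ_{n=J_{k-1}+(i-1)j_k+1}^{J_{k-1}+i j_k} w_n`, any finitely supported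
array of coefficients applied to the shifted normalized constant-coefficient blocks
`d_i^{(j_k),k}` satisfies
`B Σ_k ‖(a_i^{(k)})_{i≤k}‖^p ≤ ‖Σ_{k,i} a_i^{(k)} d_i^{(j_k),k}‖^p ≤ A^p Σ_k ‖(a_i^{(k)})_{i≤k}‖^p`,
i.e. the blocks are equivalent to the canonical basis of `(⊕_k d(w,p)^k)_p`. -/
theorem stmt17 (p : ℝ) (hp : 1 ≤ p) (w : ℕ → ℝ) (hw1 : w 0 = 1) (hwpos : ∀ n, 0 < w n)
    (hwmono : Antitone w) (hwc0 : Tendsto w atTop (nhds 0)) (hwdiv : ¬ Summable w)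
    (j : ℕ → ℕ) (hjpos : ∀ k, 1 ≤ k → 1 ≤ j k)
    (J : ℕ → ℕ) (hJ : ∀ k, J k = ∑ m ∈ Finset.Icc 1 k, m * j m)
    (A B : ℝ) (hA : 0 < A) (hB : 0 < B)
    (hi : ∀ k, 1 ≤ k → ∀ i, 1 ≤ i → i ≤ k →
      (∑ n ∈ Finset.Ico ((i - 1) * j k) (i * j k), w n) /
          (∑ n ∈ Finset.range (j k), w n) ≤ A * w (i - 1))
    (hii : ∀ k, 1 ≤ k → ∀ i, 1 ≤ i → i ≤ k →
      B * w (i - 1) ≤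
        (∑ n ∈ Finset.Ico (J (k - 1) + (i - 1) * j k) (J (k - 1) + i * j k), w n) /
          (∑ n ∈ Finset.range (j k), w n))
    (K : ℕ) (a : ℕ → ℕ → ℝ)
    (hsupp : ∀ k i, (k < 1 ∨ K < k ∨ i < 1 ∨ k < i) → a k i = 0) :
    B * ∑ k ∈ Finset.Icc 1 K,
        lorentzNorm w p (fun i => if i + 1 ≤ k then a k (i + 1) else 0) ^ p ≤
      lorentzNorm w p (fun n => ∑ k ∈ Finset.Icc 1 K, ∑ i ∈ Finset.Icc 1 k,
        a k i * (if n ∈ Finset.Ico (J (k - 1) + (i - 1) * j k) (J (k - 1) + i * j k) then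
          (∑ m ∈ Finset.range (j k), w m) ^ (-(1 / p)) else 0)) ^ p ∧
    lorentzNorm w p (fun n => ∑ k ∈ Finset.Icc 1 K, ∑ i ∈ Finset.Icc 1 k,
        a k i * (if n ∈ Finset.Ico (J (k - 1) + (i - 1) * j k) (J (k - 1) + i * j k) then
          (∑ m ∈ Finset.range (j k), w m) ^ (-(1 / p)) else 0)) ^ p ≤
      A ^ p * ∑ k ∈ Finset.Icc 1 K,
        lorentzNorm w p (fun i => if i + 1 ≤ k then a k (i + 1) else 0) ^ p :=
  stmt17_general p hp w hw1 hwpos hwmono j hjpos J hJ A B hi hii K a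
end
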